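/- arXiv:2310.17610 — 12 statements merged into one kernel-verified Lean document; each statement's English description precedes it below -/
import Mathlib

section
/- Let f : ℝ^d → ℝ be a convex continuously differentiable function, let x : [0,∞) → ℝ^d be a gradient flow of f, and let x* ∈ ℝ^d be any point. Then the function L : [0,∞) → ℝ defined by L(t) = t·(f(x(t)) − f(x*)) + (1/2)·‖x(t) − x*‖² is non-increasing on [0,∞). -/
/-!
Along the flow, `d/dt ‖x t - x*‖² / 2 = -⟪∇f (x t), x t - x*⟫ ≤ f x* - f (x t)` by the first-order
characterisation of convexity, while `d/dt [t (f (x t) - f x*)] = f (x t) - f x* - t ‖∇f (x t)‖²`.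
Adding the two, the derivative of the Lyapunov function is at most `-t ‖∇f (x t)‖² ≤ 0`.
-/

open Set

theorem ConvexOn.add_fderiv_sub_le {F : Type*} [NormedAddCommGroup F] [NormedSpace ℝ F]
    {s : Set F} {f : F → ℝ} {f' : F →L[ℝ] ℝ} {y z : F}
    (hfc : ConvexOn ℝ s f) (hy : y ∈ s) (hz : z ∈ s) (hf : HasFDerivAt f f' y) :
    f y + f' (z - y) ≤ f z := by
  let ℓ : ℝ →ᵃ[ℝ] F := AffineMap.lineMap y z
  have hconv : ConvexOn ℝ (ℓ ⁻¹' s) (f ∘ ℓ) := hfc.comp_affineMap ℓ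
  have hderiv : HasDerivAt (f ∘ ℓ) (f' (z - y)) 0 := by
    rw [← AffineMap.lineMap_apply_zero y z (k := ℝ)] at hf
    exact hf.comp_hasDerivAt 0 AffineMap.hasDerivAt_lineMap
  have hslope := hconv.le_slope_of_hasDerivAt (x := 0) (y := 1) (by simpa [ℓ]) (by simpa [ℓ])
    one_pos hderiv
  simp only [ℓ, Function.comp_apply, AffineMap.lineMap_apply_zero, AffineMap.lineMap_apply_one,
    slope_def_field, sub_zero, div_one] at hslope
  linarith

variable {E : Type*} [NormedAddCommGroup E] [InnerProductSpace ℝ E] [CompleteSpace E]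

theorem ConvexOn.add_inner_gradient_sub_le {s : Set E} {f : E → ℝ} {g y z : E}
    (hfc : ConvexOn ℝ s f) (hy : y ∈ s) (hz : z ∈ s) (hf : HasGradientAt f g y) :
    f y + inner ℝ g (z - y) ≤ f z := by
  simpa using hfc.add_fderiv_sub_le hy hz hf.hasFDerivAt

theorem hasDerivAt_lyapunov {f : E → ℝ} {x : ℝ → E} {g v : E} {t : ℝ} (xstar : E)
    (hx : HasDerivAt x v t) (hf : HasGradientAt f g (x t)) :
    HasDerivAt (fun s => s * (f (x s) - f xstar) + ‖x s - xstar‖ ^ 2 / 2)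
      (f (x t) - f xstar + t * inner ℝ g v + inner ℝ (x t - xstar) v) t := by
  have hfx : HasDerivAt (fun s => f (x s)) (inner ℝ g v) t :=
    hf.hasFDerivAt.comp_hasDerivAt t hx
  have := ((hasDerivAt_id t).mul (hfx.sub_const (f xstar))).add
    ((hx.sub_const xstar).norm_sq.div_const 2)
  exact this.congr_deriv (by simp only [id, one_mul]; ring)

theorem ConvexOn.lyapunov_deriv_neg_gradient_nonpos {f : E → ℝ} {g y : E} {t : ℝ} (xstar : E)
    (hfc : ConvexOn ℝ univ f) (hf : HasGradientAt f g y) (ht : 0 ≤ t) :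
    f y - f xstar + t * inner ℝ g (-g) + inner ℝ (y - xstar) (-g) ≤ 0 := by
  have hfirst := hfc.add_inner_gradient_sub_le (mem_univ y) (mem_univ xstar) hf
  rw [inner_neg_right, inner_neg_right, real_inner_self_eq_norm_sq, real_inner_comm,
    ← neg_sub xstar, inner_neg_right]
  linarith [mul_nonneg ht (sq_nonneg ‖g‖)]

/-- For a convex C¹ function `f : ℝ^d → ℝ`, a gradient flow `x` of `f`
on `[0,∞)` and any point `x*`, the function
`L(t) = t·(f(x(t)) − f(x*)) + ‖x(t) − x*‖²/2` is non-increasing on `[0,∞)`. -/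
theorem gradient_flow_lyapunov_antitone
    (d : ℕ) (f : EuclideanSpace ℝ (Fin d) → ℝ)
    (hconv : ConvexOn ℝ Set.univ f) (hf : ContDiff ℝ 1 f)
    (x : ℝ → EuclideanSpace ℝ (Fin d))
    (hx : ∀ t ∈ Set.Ici (0:ℝ),
      HasDerivWithinAt x (-(gradient f (x t))) (Set.Ici 0) t)
    (xstar : EuclideanSpace ℝ (Fin d)) :
    AntitoneOn (fun t : ℝ => t * (f (x t) - f xstar) + ‖x t - xstar‖ ^ 2 / 2)
      (Set.Ici 0) := by
  have hgrad (y : EuclideanSpace ℝ (Fin d)) : HasGradientAt f (gradient f y) y :=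
    ((hf.differentiable one_ne_zero) y).hasGradientAt
  have hxc : ContinuousOn x (Ici 0) := fun t ht => (hx t ht).continuousWithinAt
  have hfc := hf.continuous
  refine antitoneOn_of_hasDerivWithinAt_nonpos (convex_Ici 0) (by fun_prop)
    (f' := fun t => f (x t) - f xstar + t * inner ℝ (gradient f (x t)) (-gradient f (x t))
      + inner ℝ (x t - xstar) (-gradient f (x t))) (fun t ht => ?_) (fun t ht => ?_)
  <;> rw [interior_Ici] at ht
  · exact (hasDerivAt_lyapunov xstar ((hx t (mem_Ioi.1 ht).le).hasDerivAt (Ici_mem_nhds ht))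
      (hgrad (x t))).hasDerivWithinAt
  · exact hconv.lyapunov_deriv_neg_gradient_nonpos xstar (hgrad (x t)) (mem_Ioi.1 ht).le
end

section
/- Let f : ℝ^d → ℝ be a convex continuously differentiable function and let x : [0,∞) → ℝ^d be a gradient flow of f. Then f(x(t)) converges, as t → ∞, to inf_{y ∈ ℝ^d} f(y) (as an extended real number; in particular, if f is unbounded below then f(x(t)) → −∞). -/
/-!
For every `y`, the Lyapunov function `‖x t - y‖ ^ 2 / 2 + t * (f (x t) - f y)` is nonincreasing
along the flow: its derivative is `⟪∇f, y - x⟫ + (f x - f y) - t * ‖∇f‖ ^ 2`, which is `≤ 0` by the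
first-order characterisation of convexity. Hence `f (x t) ≤ f y + ‖x 0 - y‖ ^ 2 / (2 * t)`, so
`f (x t)` eventually drops below anything above `f y`, while it never drops below `inf f`.
-/

open Filter Set

open scoped RealInnerProductSpace

theorem ConvexOn.add_fderiv_sub_le_s1 {E : Type*} [NormedAddCommGroup E] [NormedSpace ℝ E]
    {f : E → ℝ} {f' : E →L[ℝ] ℝ} {a : E} (hconv : ConvexOn ℝ univ f) (hf : HasFDerivAt f f' a)
    (b : E) : f a + f' (b - a) ≤ f b := by
  let G : ℝ → ℝ := fun s => f (AffineMap.lineMap a b s)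
  have hG : ConvexOn ℝ univ G := by
    simpa [Function.comp_def] using hconv.comp_affineMap (AffineMap.lineMap (k := ℝ) a b)
  have hline : HasDerivAt (fun s : ℝ => AffineMap.lineMap (k := ℝ) a b s) (b - a) 0 :=
    AffineMap.hasDerivAt_lineMap
  have hG' : HasDerivAt G (f' (b - a)) 0 :=
    (by simpa using hf : HasFDerivAt f f' (AffineMap.lineMap a b (0 : ℝ))).comp_hasDerivAt 0 hline
  have hslope := hG.le_slope_of_hasDerivAt (mem_univ 0) (mem_univ 1) one_pos hG'
  simp only [G, slope_def_field, AffineMap.lineMap_apply_zero, AffineMap.lineMap_apply_one,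
    sub_zero, div_one] at hslope
  linarith

section GradientFlow

variable {E : Type*} [NormedAddCommGroup E] [InnerProductSpace ℝ E] [CompleteSpace E]
  {f : E → ℝ} {x : ℝ → E}

theorem ConvexOn.add_inner_gradient_sub_le_s1 (hconv : ConvexOn ℝ univ f) {a : E}
    (hf : DifferentiableAt ℝ f a) (b : E) : f a + ⟪gradient f a, b - a⟫ ≤ f b := by
  simpa [InnerProductSpace.toDual_apply_apply] using
    hconv.add_fderiv_sub_le_s1 hf.hasGradientAt.hasFDerivAt b

theorem hasDerivWithinAt_comp_gradientFlow {s : Set ℝ} {t : ℝ} (hf : DifferentiableAt ℝ f (x t))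
    (hx : HasDerivWithinAt x (-gradient f (x t)) s t) :
    HasDerivWithinAt (f ∘ x) (-‖gradient f (x t)‖ ^ 2) s t := by
  have hchain := hf.hasFDerivAt.comp_hasDerivWithinAt t hx
  rwa [map_neg, ← inner_gradient_left, real_inner_self_eq_norm_sq] at hchain

theorem antitoneOn_gradientFlow_lyapunov (hconv : ConvexOn ℝ univ f) (hf : Differentiable ℝ f)
    (hx : ∀ t ∈ Ici (0 : ℝ), HasDerivWithinAt x (-gradient f (x t)) (Ici 0) t) (y : E) :
    AntitoneOn (fun t => ‖x t - y‖ ^ 2 / 2 + t * (f (x t) - f y)) (Ici 0) := by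
  have hderiv : ∀ t ∈ Ici (0 : ℝ), HasDerivWithinAt
      (fun t => ‖x t - y‖ ^ 2 / 2 + t * (f (x t) - f y))
      (⟪gradient f (x t), y - x t⟫ + (f (x t) - f y) - t * ‖gradient f (x t)‖ ^ 2) (Ici 0) t := by
    intro t ht
    have hdist := ((hx t ht).sub_const y).norm_sq.div_const 2
    have hval := (hasDerivWithinAt_id t _).mul
      ((hasDerivWithinAt_comp_gradientFlow (hf _) (hx t ht)).sub_const (f y))
    refine (hdist.add hval).congr_deriv ?_
    rw [inner_neg_right, real_inner_comm, ← inner_neg_right, neg_sub]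
    simp only [id, Function.comp_apply]
    ring
  refine antitoneOn_of_hasDerivWithinAt_nonpos (convex_Ici 0)
    (fun t ht => (hderiv t ht).continuousWithinAt)
    (fun t ht => (hderiv t (interior_subset ht)).mono interior_subset) fun t ht => ?_
  rw [interior_Ici] at ht
  nlinarith [hconv.add_inner_gradient_sub_le_s1 (hf (x t)) y,
    mul_nonneg (le_of_lt ht) (sq_nonneg ‖gradient f (x t)‖)]

theorem gradientFlow_le_add_div (hconv : ConvexOn ℝ univ f) (hf : Differentiable ℝ f)
    (hx : ∀ t ∈ Ici (0 : ℝ), HasDerivWithinAt x (-gradient f (x t)) (Ici 0) t) (y : E)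
    {t : ℝ} (ht : 0 < t) : f (x t) ≤ f y + ‖x 0 - y‖ ^ 2 / 2 / t := by
  have hmono := antitoneOn_gradientFlow_lyapunov hconv hf hx y (mem_Ici.2 le_rfl) ht.le ht.le
  simp only [zero_mul, add_zero] at hmono
  have : f (x t) - f y ≤ ‖x 0 - y‖ ^ 2 / 2 / t := by
    rw [le_div_iff₀ ht]
    nlinarith [sq_nonneg ‖x t - y‖]
  linarith

end GradientFlow

theorem tendsto_iInf_of_forall_eventually_lt {α β ι : Type*} [CompleteLinearOrder α]
    [TopologicalSpace α] [OrderTopology α] {l : Filter β} {F : ι → α} {u : β → α}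
    (hle : ∀ᶠ t in l, ⨅ i, F i ≤ u t) (hlt : ∀ i b, F i < b → ∀ᶠ t in l, u t < b) :
    Tendsto u l (nhds (⨅ i, F i)) :=
  tendsto_order.2 ⟨fun _ ha => hle.mono fun _ ht => ha.trans_le ht,
    fun _ hb => let ⟨i, hi⟩ := iInf_lt_iff.1 hb; hlt i _ hi⟩

/-- For a convex C¹ function `f : ℝ^d → ℝ` and a gradient flow `x` of `f`
on `[0,∞)`, the values `f(x(t))` converge, as `t → ∞`, to `inf f` computed in the
extended real numbers (which may be `−∞`). -/
theorem gradient_flow_tendsto_iInf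
    (d : ℕ) (f : EuclideanSpace ℝ (Fin d) → ℝ)
    (hconv : ConvexOn ℝ Set.univ f) (hf : ContDiff ℝ 1 f)
    (x : ℝ → EuclideanSpace ℝ (Fin d))
    (hx : ∀ t ∈ Set.Ici (0:ℝ),
      HasDerivWithinAt x (-(gradient f (x t))) (Set.Ici 0) t) :
    Filter.Tendsto (fun t : ℝ => (f (x t) : EReal)) Filter.atTop
      (nhds (⨅ y : EuclideanSpace ℝ (Fin d), (f y : EReal))) := by
  refine tendsto_iInf_of_forall_eventually_lt (.of_forall fun t => iInf_le _ (x t)) ?_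
  intro y b hb
  have hbound : Tendsto (fun t : ℝ => ((f y + ‖x 0 - y‖ ^ 2 / 2 / t : ℝ) : EReal)) atTop
      (nhds (f y : EReal)) :=
    EReal.tendsto_coe.2 <| by
      simpa using (tendsto_const_nhds (x := f y)).add
        ((tendsto_const_nhds (x := ‖x 0 - y‖ ^ 2 / 2)).div_atTop tendsto_id)
  filter_upwards [hbound.eventually_lt_const hb, eventually_gt_atTop 0] with t hlt ht
  exact (EReal.coe_le_coe_iff.2
    (gradientFlow_le_add_div hconv (hf.differentiable one_ne_zero) hx y ht)).trans_lt hlt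
end

section
/- Let f : ℝ^d → ℝ be a convex continuously differentiable function, let x* ∈ ℝ^d satisfy f(x*) = inf_{y ∈ ℝ^d} f(y), and let x : [0,∞) → ℝ^d be a gradient flow of f. Then ∫₀^∞ (f(x(t)) − f(x*)) dt ≤ ‖x(0) − x*‖² / 2. -/
open Filter MeasureTheory Set
open scoped RealInnerProductSpace

/-!
Along the flow, `E t = ‖x t - x*‖² / 2` satisfies `E' = ⟪x - x*, -∇f x⟫ ≤ f x* - f x` by the
first-order characterization of convexity. Integrating, `∫₀ᵀ (f (x t) - f x*) dt ≤ E 0 - E T ≤ E 0`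
for every `T`, and these bounds pass to `(0, ∞)` by monotone convergence.
-/

theorem ConvexOn.fderiv_sub_le {E : Type*} [NormedAddCommGroup E] [NormedSpace ℝ E]
    {s : Set E} {f : E → ℝ} {f' : E →L[ℝ] ℝ} {a b : E}
    (hf : ConvexOn ℝ s f) (ha : a ∈ s) (hb : b ∈ s) (hf' : HasFDerivAt f f' a) :
    f' (b - a) ≤ f b - f a := by
  have hline : HasDerivAt (f ∘ (AffineMap.lineMap a b : ℝ → E)) (f' (b - a)) 0 := by
    rw [← AffineMap.lineMap_apply_zero (k := ℝ) a b] at hf'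
    exact hf'.comp_hasDerivAt 0 AffineMap.hasDerivAt_lineMap
  have := (hf.comp_affineMap (AffineMap.lineMap a b)).le_slope_of_hasDerivAt
    (by simpa using ha) (by simpa using hb) one_pos hline
  simpa [slope_def_field] using this

theorem ConvexOn.inner_gradient_sub_le {F : Type*} [NormedAddCommGroup F]
    [InnerProductSpace ℝ F] [CompleteSpace F] {s : Set F} {f : F → ℝ} {a b : F}
    (hf : ConvexOn ℝ s f) (ha : a ∈ s) (hb : b ∈ s) (hfa : DifferentiableAt ℝ f a) :
    ⟪gradient f a, b - a⟫ ≤ f b - f a := by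
  simpa using hf.fderiv_sub_le ha hb hfa.hasGradientAt.hasFDerivAt

theorem setLIntegral_Ioi_le_of_forall_Ioc_le {f : ℝ → ENNReal} {a : ℝ} {C : ENNReal}
    (h : ∀ T, a ≤ T → ∫⁻ t in Ioc a T, f t ≤ C) : ∫⁻ t in Ioi a, f t ≤ C := by
  have hIoi : Ioi a = ⋃ n : ℕ, Ioc a (a + n) := by
    ext t
    simp only [mem_Ioi, mem_iUnion, mem_Ioc]
    refine ⟨fun ht => ?_, fun ⟨_, ht, _⟩ => ht⟩
    obtain ⟨n, hn⟩ := exists_nat_ge (t - a)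
    exact ⟨n, ht, by linarith⟩
  have hmono : Monotone fun n : ℕ => Ioc a (a + n) := fun m n hmn =>
    Ioc_subset_Ioc_right (by gcongr)
  rw [hIoi, setLIntegral_iUnion_of_directed _ hmono.directed_le]
  exact iSup_le fun n => h _ (by simp)

theorem lintegral_ofReal_Ioi_le_of_intervalIntegral_le {g : ℝ → ℝ} {a C : ℝ}
    (hg : ∀ t, 0 ≤ g t) (hg_int : ∀ T, a ≤ T → IntegrableOn g (Ioc a T))
    (h : ∀ T, a ≤ T → ∫ t in a..T, g t ≤ C) :
    ∫⁻ t in Ioi a, ENNReal.ofReal (g t) ≤ ENNReal.ofReal C := by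
  refine setLIntegral_Ioi_le_of_forall_Ioc_le fun T hT => ?_
  rw [← ofReal_integral_eq_lintegral_ofReal (hg_int T hT) (.of_forall hg),
    ← intervalIntegral.integral_of_le hT]
  exact ENNReal.ofReal_le_ofReal (h T hT)

theorem HasDerivWithinAt.half_norm_sq_sub {F : Type*} [NormedAddCommGroup F]
    [InnerProductSpace ℝ F] {x : ℝ → F} {s : Set ℝ} {t : ℝ} {v : F} (c : F)
    (hx : HasDerivWithinAt x v s t) :
    HasDerivWithinAt (fun t => ‖x t - c‖ ^ 2 / 2) ⟪x t - c, v⟫ s t := by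
  simpa using ((hx.sub_const c).norm_sq).div_const 2

theorem intervalIntegral_sub_le_of_gradient_flow {F : Type*} [NormedAddCommGroup F]
    [InnerProductSpace ℝ F] [CompleteSpace F] {f : F → ℝ} {x : ℝ → F} (hconv : ConvexOn ℝ univ f)
    (hdiff : Differentiable ℝ f)
    (hx : ∀ t ∈ Ici (0 : ℝ), HasDerivWithinAt x (-gradient f (x t)) (Ici 0) t)
    (c : F) {T : ℝ} (hT : 0 ≤ T) :
    ∫ t in (0 : ℝ)..T, (f (x t) - f c) ≤ ‖x 0 - c‖ ^ 2 / 2 - ‖x T - c‖ ^ 2 / 2 := by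
  have hxc : ContinuousOn x (Icc 0 T) := fun t ht =>
    (hx t ht.1).continuousWithinAt.mono Icc_subset_Ici_self
  have hdescent : ∀ t, f (x t) - f c ≤ ⟪x t - c, gradient f (x t)⟫ := fun t => by
    have := hconv.inner_gradient_sub_le (mem_univ (x t)) (mem_univ c) (hdiff (x t))
    rw [← neg_sub, inner_neg_right, real_inner_comm] at this
    linarith
  have := intervalIntegral.integral_le_sub_of_hasDeriv_right_of_le hT
    (g := fun t => -(‖x t - c‖ ^ 2 / 2)) (φ := fun t => f (x t) - f c)
    (by fun_prop)
    (fun t ht => by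
      simpa using ((hx t ht.1.le).half_norm_sq_sub c).fun_neg.mono (Ioi_subset_Ici ht.1.le))
    ((hdiff.continuous.comp_continuousOn hxc).sub continuousOn_const).integrableOn_Icc
    (fun t _ => hdescent t)
  linarith

/-- For a convex C¹ function `f : ℝ^d → ℝ` with minimizer `x*` and a
gradient flow `x` of `f`, the excess energy is integrable:
`∫₀^∞ (f(x(t)) − f(x*)) dt ≤ ‖x(0) − x*‖²/2`. -/
theorem gradient_flow_excess_energy_integrable
    (d : ℕ) (f : EuclideanSpace ℝ (Fin d) → ℝ)
    (hconv : ConvexOn ℝ Set.univ f) (hf : ContDiff ℝ 1 f)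
    (xstar : EuclideanSpace ℝ (Fin d)) (hmin : ∀ y, f xstar ≤ f y)
    (x : ℝ → EuclideanSpace ℝ (Fin d))
    (hx : ∀ t ∈ Set.Ici (0:ℝ),
      HasDerivWithinAt x (-(gradient f (x t))) (Set.Ici 0) t) :
    ∫⁻ t in Set.Ioi (0:ℝ), ENNReal.ofReal (f (x t) - f xstar) ≤
      ENNReal.ofReal (‖x 0 - xstar‖ ^ 2 / 2) := by
  have hdiff : Differentiable ℝ f := hf.differentiable one_ne_zero
  have hcont : ContinuousOn (fun t => f (x t) - f xstar) (Ici 0) :=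
    (hdiff.continuous.comp_continuousOn fun t ht => (hx t ht).continuousWithinAt).sub
      continuousOn_const
  refine lintegral_ofReal_Ioi_le_of_intervalIntegral_le (fun t => sub_nonneg.2 (hmin (x t)))
    (fun T _ => ?_) (fun T hT => ?_)
  · exact ((hcont.mono Icc_subset_Ici_self).integrableOn_Icc).mono_set Ioc_subset_Icc_self
  · have := intervalIntegral_sub_le_of_gradient_flow hconv hdiff hx xstar hT
    linarith [sq_nonneg ‖x T - xstar‖]
end

section
/- Let g : [0,∞) → (0,∞) be a monotone decreasing function with ∫₀^∞ g(t) dt < ∞. Then there exists u₀ ∈ L²((1,∞)) (with Lebesgue measure) such that for every t ≥ 1, (1/2)·∫₁^∞ e^{−2t/s}·u₀(s)²/s ds ≥ g(t). In other words, the gradient flow u(t) of the convex quadratic functional F with initial datum u₀ satisfies F(u(t)) ≥ g(t) for all t ≥ 1, so the energy decay of gradient flows of a fixed quadratic convex functional on a Hilbert space can be slower than any prescribed monotone integrable rate. -/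
/-!
Take `u₀(s)² = 4e²·g(s/2)`, which is integrable on `(1,∞)` because `g` is. For `t ≥ 1` the
window `s ∈ (t, 2t]` already carries the energy bound: there `e^{-2t/s}/s ≥ e^{-2}/(2t)` and
`g(s/2) ≥ g(t)` by monotonicity, so the window contributes at least `2·g(t)` to the integral.
-/

open Filter MeasureTheory Set Real

lemma memLp_two_sqrt {α : Type*} [MeasurableSpace α] {μ : Measure α} {f : α → ℝ}
    (hf : Integrable f μ) (hf_nonneg : 0 ≤ᵐ[μ] f) : MemLp (fun x => √(f x)) 2 μ :=
  (memLp_two_iff_integrable_sq (continuous_sqrt.comp_aestronglyMeasurable hf.1)).2 <|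
    hf.congr (hf_nonneg.mono fun _ hx => (sq_sqrt hx).symm)

lemma integrableOn_Ioi_comp_div {f : ℝ → ℝ} {a c : ℝ} (hc : 0 < c)
    (hf : IntegrableOn f (Ioi (a / c))) : IntegrableOn (fun s => f (s / c)) (Ioi a) := by
  simpa only [div_eq_mul_inv] using
    (integrableOn_Ioi_comp_mul_right_iff f a (inv_pos.2 hc)).2 (by simpa [div_eq_mul_inv] using hf)

lemma norm_exp_div_div_le_one {a s : ℝ} (ha : a ≤ 0) (hs : 1 ≤ s) : ‖exp (a / s) / s‖ ≤ 1 := by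
  have hs0 : 0 < s := by linarith
  rw [norm_of_nonneg (by positivity), div_le_one hs0]
  calc exp (a / s) ≤ 1 := exp_le_one_iff.2 (div_nonpos_of_nonpos_of_nonneg ha hs0.le)
    _ ≤ s := hs

lemma integrableOn_exp_div_div_mul {f : ℝ → ℝ} {a : ℝ} (ha : a ≤ 0)
    (hf : IntegrableOn f (Ioi 1)) : IntegrableOn (fun s => exp (a / s) / s * f s) (Ioi 1) :=
  hf.bdd_mul (by fun_prop : Measurable fun s : ℝ => exp (a / s) / s).aestronglyMeasurable <|
    (ae_restrict_iff' measurableSet_Ioi).2 <|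
      ae_of_all _ fun _ hs => norm_exp_div_div_le_one ha (le_of_lt hs)

lemma exp_neg_two_div_le_exp_neg_two_mul_div_div {t s : ℝ} (ht : 0 < t) (hs : s ∈ Ioc t (2 * t)) :
    exp (-2) / (2 * t) ≤ exp (-2 * t / s) / s := by
  have hs0 : 0 < s := ht.trans hs.1
  gcongr
  · rw [le_div_iff₀ hs0]
    linarith [hs.1]
  · exact hs.2

lemma exp_neg_two_div_two_mul_le_setIntegral_Ioc {g : ℝ → ℝ} {t : ℝ} (ht : 0 < t)
    (hg_nonneg : 0 ≤ g t) (hg : AntitoneOn g (Ici 0))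
    (hint : IntegrableOn (fun s => exp (-2 * t / s) / s * g (s / 2)) (Ioc t (2 * t))) :
    exp (-2) / 2 * g t ≤ ∫ s in Ioc t (2 * t), exp (-2 * t / s) / s * g (s / 2) := by
  have hbound : ∀ s ∈ Ioc t (2 * t), exp (-2) / (2 * t) * g t ≤ exp (-2 * t / s) / s * g (s / 2) :=
    fun s hs => mul_le_mul (exp_neg_two_div_le_exp_neg_two_mul_div_div ht hs)
      (hg (mem_Ici.2 (by linarith [hs.1])) ht.le (by linarith [hs.2])) hg_nonneg
      (by have := ht.trans hs.1; positivity)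
  calc exp (-2) / 2 * g t = exp (-2) / (2 * t) * g t * volume.real (Ioc t (2 * t)) := by
        rw [measureReal_def, volume_Ioc, ENNReal.toReal_ofReal (by linarith)]
        field_simp
        ring
    _ ≤ _ := setIntegral_ge_of_const_le_real measurableSet_Ioc measure_Ioc_lt_top.ne hbound hint

/-- Slow convergence of gradient flows of a fixed quadratic convex
functional on the Hilbert space `L²((1,∞))`. For any positive, monotone decreasing,
integrable function `g : [0,∞) → (0,∞)` there is an initial datum `u₀ ∈ L²((1,∞))`
such that the gradient flow `u(t)(s) = e^{−t/s}·u₀(s)` of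
`F(u) = (1/2)·∫₁^∞ u(s)²/s ds` satisfies
`F(u(t)) = (1/2)·∫₁^∞ e^{−2t/s}·u₀(s)²/s ds ≥ g(t)` for all `t ≥ 1`. -/
theorem hilbert_gradient_flow_arbitrarily_slow
    (g : ℝ → ℝ) (hpos : ∀ t ∈ Set.Ici (0:ℝ), 0 < g t)
    (hmono : AntitoneOn g (Set.Ici 0))
    (hint : MeasureTheory.IntegrableOn g (Set.Ioi 0)) :
    ∃ u₀ : ℝ → ℝ,
      MeasureTheory.MemLp u₀ 2 (MeasureTheory.volume.restrict (Set.Ioi 1)) ∧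
      ∀ t ≥ (1:ℝ),
        g t ≤ (1/2) * ∫ s in Set.Ioi (1:ℝ), Real.exp (-2*t/s) * (u₀ s)^2 / s := by
  have hg_half_nonneg : ∀ s ∈ Ioi (1 : ℝ), 0 ≤ g (s / 2) := fun s hs =>
    (hpos _ (mem_Ici.2 (by linarith [mem_Ioi.1 hs]))).le
  have hg_half : IntegrableOn (fun s => g (s / 2)) (Ioi 1) :=
    integrableOn_Ioi_comp_div two_pos (hint.mono_set (Ioi_subset_Ioi (by norm_num)))
  refine ⟨fun s => √(4 * exp 2 * g (s / 2)), memLp_two_sqrt (hg_half.const_mul _)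
    ((ae_restrict_iff' measurableSet_Ioi).2 <| ae_of_all _ fun s hs =>
      mul_nonneg (by positivity) (hg_half_nonneg s hs)), fun t ht => ?_⟩
  have hkernel := integrableOn_exp_div_div_mul (a := -2 * t) (by linarith) hg_half
  have hwindow_sub : Ioc t (2 * t) ⊆ Ioi 1 := Ioc_subset_Ioi_self.trans (Ioi_subset_Ioi ht)
  have hwindow := exp_neg_two_div_two_mul_le_setIntegral_Ioc (by linarith : 0 < t)
    (hpos t (mem_Ici.2 (by linarith))).le hmono (hkernel.mono_set hwindow_sub)
  have hintegrand : ∀ s ∈ Ioi (1 : ℝ), exp (-2 * t / s) * √(4 * exp 2 * g (s / 2)) ^ 2 / s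
      = 4 * exp 2 * (exp (-2 * t / s) / s * g (s / 2)) := fun s hs => by
    rw [sq_sqrt (mul_nonneg (by positivity) (hg_half_nonneg s hs))]
    ring
  calc g t = 1 / 2 * (4 * exp 2 * (exp (-2) / 2 * g t)) := by
        rw [exp_neg]
        field_simp
        ring
    _ ≤ 1 / 2 * (4 * exp 2 * ∫ s in Ioi 1, exp (-2 * t / s) / s * g (s / 2)) := by
        gcongr
        refine hwindow.trans (setIntegral_mono_set hkernel ?_ hwindow_sub.eventuallyLE)
        refine (ae_restrict_iff' measurableSet_Ioi).2 (ae_of_all _ fun s hs => ?_)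
        have hs0 : 0 < s := one_pos.trans hs
        exact mul_nonneg (by positivity) (hg_half_nonneg s hs)
    _ = _ := by
        rw [← integral_const_mul, setIntegral_congr_fun measurableSet_Ioi hintegrand]
end

section
/- Let g : [0,∞) → [0,∞) be a monotone decreasing convex C²-function with lim_{t→∞} g(t) = 0 and ∫₀^∞ √(−g'(t)) dt < ∞. Then there exist a convex continuously differentiable function φ : ℝ → [0,∞) with φ(x) = 0 if and only if x = 0, and a gradient flow x : [0,∞) → ℝ of φ (i.e. a differentiable curve with x'(t) = −φ'(x(t))) such that φ(x(t)) = g(t) for all t ≥ 0. -/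
open Filter MeasureTheory Set Topology

/-!
Put `u t = √(-g' t)` and `x t = ∫_t^∞ u`, so that `x' = -u`. The flow equation forces
`φ' (x t) = u t`, so `φ'` at a level `y > 0` is defined as `u` at the first time `x` reaches `y`,
and `φ y = ∫_0^y φ'`. Since `x` and `u` both decrease, `φ'` is monotone and `φ` is convex;
being monotone and onto, `φ'` is continuous. Finally `d/dt φ (x t) = -(u t)² = g' t` and both
`φ ∘ x` and `g` tend to `0`, hence `φ (x t) = g t`.
-/

structure IsSpeedProfile (u : ℝ → ℝ) : Prop where
  continuous : Continuous u
  antitone : Antitone u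
  nonneg : ∀ t, 0 ≤ u t
  integrableOn_Ioi_zero : IntegrableOn u (Ioi 0)
  tendsto_atBot : Tendsto u atBot atTop

noncomputable def tailIntegral (u : ℝ → ℝ) (t : ℝ) : ℝ := ∫ s in Ioi t, u s

noncomputable def hittingTime (u : ℝ → ℝ) (y : ℝ) : ℝ := sInf {t | tailIntegral u t ≤ y}

noncomputable def potentialDeriv (u : ℝ → ℝ) (y : ℝ) : ℝ :=
  if y ≤ 0 then y else u (hittingTime u y)

noncomputable def potential (u : ℝ → ℝ) (y : ℝ) : ℝ := ∫ z in (0 : ℝ)..y, potentialDeriv u z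

section

variable {u : ℝ → ℝ}

theorem tendsto_tailIntegral_atTop : Tendsto (tailIntegral u) atTop (𝓝 0) :=
  tendsto_integral_Ioi_zero tendsto_id

theorem potentialDeriv_of_nonpos {y : ℝ} (hy : y ≤ 0) : potentialDeriv u y = y := if_pos hy

theorem potentialDeriv_of_pos {y : ℝ} (hy : 0 < y) : potentialDeriv u y = u (hittingTime u y) :=
  if_neg hy.not_ge

theorem potential_zero : potential u 0 = 0 := intervalIntegral.integral_same

namespace IsSpeedProfile

theorem integrableOn_Ioi (hu : IsSpeedProfile u) (a : ℝ) : IntegrableOn u (Ioi a) :=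
  (hu.continuous.integrableOn_Icc.union hu.integrableOn_Ioi_zero).mono_set fun s hs =>
    (le_or_gt s 0).imp (fun h => ⟨le_of_lt hs, h⟩) id

theorem tailIntegral_sub_tailIntegral (hu : IsSpeedProfile u) (a b : ℝ) :
    tailIntegral u a - tailIntegral u b = ∫ s in a..b, u s :=
  intervalIntegral.integral_Ioi_sub_Ioi' (hu.integrableOn_Ioi a) (hu.integrableOn_Ioi b)

theorem hasDerivAt_tailIntegral (hu : IsSpeedProfile u) (t : ℝ) :
    HasDerivAt (tailIntegral u) (-u t) t := by
  have h : tailIntegral u = fun s => tailIntegral u 0 - ∫ r in (0 : ℝ)..s, u r := by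
    ext s
    rw [← hu.tailIntegral_sub_tailIntegral, sub_sub_cancel]
  rw [h]
  exact ((hu.continuous.integral_hasStrictDerivAt 0 t).hasDerivAt).const_sub _

theorem continuous_tailIntegral (hu : IsSpeedProfile u) : Continuous (tailIntegral u) :=
  continuous_iff_continuousAt.2 fun t => (hu.hasDerivAt_tailIntegral t).continuousAt

theorem antitone_tailIntegral (hu : IsSpeedProfile u) : Antitone (tailIntegral u) :=
  antitone_of_hasDerivAt_nonpos hu.hasDerivAt_tailIntegral fun t => neg_nonpos.2 (hu.nonneg t)

theorem tailIntegral_nonneg (hu : IsSpeedProfile u) (t : ℝ) : 0 ≤ tailIntegral u t :=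
  setIntegral_nonneg measurableSet_Ioi fun s _ => hu.nonneg s

theorem mul_le_tailIntegral_sub (hu : IsSpeedProfile u) {a b : ℝ} (hab : a ≤ b) :
    (b - a) * u b ≤ tailIntegral u a - tailIntegral u b := by
  rw [hu.tailIntegral_sub_tailIntegral, ← smul_eq_mul, ← intervalIntegral.integral_const]
  exact intervalIntegral.integral_mono_on hab intervalIntegrable_const
    (hu.continuous.intervalIntegrable a b) fun s hs => hu.antitone hs.2

theorem eq_zero_of_tailIntegral_eq (hu : IsSpeedProfile u) {a b : ℝ} (hab : a < b)
    (h : tailIntegral u a = tailIntegral u b) : u a = 0 := by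
  have hconst : ∀ s ∈ Icc a b, tailIntegral u s = tailIntegral u a := fun s hs =>
    le_antisymm (hu.antitone_tailIntegral hs.1) (h ▸ hu.antitone_tailIntegral hs.2)
  have hzero : HasDerivWithinAt (tailIntegral u) 0 (Icc a b) a :=
    (hasDerivWithinAt_const a _ _).congr hconst rfl
  exact neg_eq_zero.1 <| (uniqueDiffOn_Icc hab a (left_mem_Icc.2 hab.le)).eq_deriv _
    (hu.hasDerivAt_tailIntegral a).hasDerivWithinAt hzero

theorem tailIntegral_eq_zero_iff (hu : IsSpeedProfile u) (t : ℝ) :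
    tailIntegral u t = 0 ↔ u t = 0 := by
  refine ⟨fun h => hu.eq_zero_of_tailIntegral_eq (lt_add_one t) ?_, fun h => ?_⟩
  · have hle : tailIntegral u (t + 1) ≤ 0 := h ▸ hu.antitone_tailIntegral (lt_add_one t).le
    exact h.trans (le_antisymm (hu.tailIntegral_nonneg _) hle)
  · exact setIntegral_eq_zero_of_forall_eq_zero fun s hs =>
      le_antisymm (h ▸ hu.antitone (le_of_lt hs)) (hu.nonneg s)

theorem exists_lt (hu : IsSpeedProfile u) {c : ℝ} (hc : 0 < c) : ∃ t, u t < c := by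
  by_contra! h
  set b := (tailIntegral u 0 + 1) / c
  have hb : 0 ≤ b := div_nonneg (by linarith [hu.tailIntegral_nonneg 0]) hc.le
  have := hu.mul_le_tailIntegral_sub hb
  have : b * c ≤ b * u b := mul_le_mul_of_nonneg_left (h b) hb
  rw [div_mul_cancel₀ _ hc.ne'] at this
  linarith [hu.tailIntegral_nonneg b]

theorem bddBelow_setOf_tailIntegral_le (hu : IsSpeedProfile u) (y : ℝ) :
    BddBelow {t | tailIntegral u t ≤ y} := by
  obtain ⟨c, hc⟩ := eventually_atBot.1 (hu.tendsto_atBot.eventually_ge_atTop 1)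
  refine ⟨min c (c - y), fun t (ht : tailIntegral u t ≤ y) => ?_⟩
  rcases le_or_gt t c with htc | htc
  · have := hu.mul_le_tailIntegral_sub htc
    have : c - t ≤ (c - t) * u c := le_mul_of_one_le_right (by linarith) (hc c le_rfl)
    linarith [hu.tailIntegral_nonneg c, min_le_right c (c - y)]
  · exact (min_le_left _ _).trans htc.le

theorem hittingTime_le (hu : IsSpeedProfile u) {y t : ℝ} (h : tailIntegral u t ≤ y) :
    hittingTime u y ≤ t :=
  csInf_le (hu.bddBelow_setOf_tailIntegral_le y) h

theorem tailIntegral_hittingTime (hu : IsSpeedProfile u) {y : ℝ} (hy : 0 < y) :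
    tailIntegral u (hittingTime u y) = y := by
  have hne : {t | tailIntegral u t ≤ y}.Nonempty :=
    ((tendsto_tailIntegral_atTop.eventually_lt_const hy).exists).imp fun _ => le_of_lt
  have hbdd := hu.bddBelow_setOf_tailIntegral_le y
  refine le_antisymm ((isClosed_le hu.continuous_tailIntegral continuous_const).csInf_mem hne hbdd)
    (ge_of_tendsto (hu.continuous_tailIntegral.continuousAt.mono_left
      (nhdsWithin_le_nhds (s := Iio (hittingTime u y)))) ?_)
  filter_upwards [self_mem_nhdsWithin] with t ht
  exact le_of_lt (not_le.1 (notMem_of_lt_csInf (s := {t | tailIntegral u t ≤ y}) ht hbdd))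

theorem hittingTime_antitoneOn (hu : IsSpeedProfile u) : AntitoneOn (hittingTime u) (Ioi 0) :=
  fun _ hy _ _ hyz => hu.hittingTime_le ((hu.tailIntegral_hittingTime hy).trans_le hyz)

theorem potentialDeriv_pos (hu : IsSpeedProfile u) {y : ℝ} (hy : 0 < y) :
    0 < potentialDeriv u y := by
  rw [potentialDeriv_of_pos hy]
  refine (hu.nonneg _).lt_of_ne fun h => hy.ne' ?_
  rw [← hu.tailIntegral_hittingTime hy, hu.tailIntegral_eq_zero_iff, h]

theorem potentialDeriv_tailIntegral (hu : IsSpeedProfile u) (t : ℝ) :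
    potentialDeriv u (tailIntegral u t) = u t := by
  rcases (hu.tailIntegral_nonneg t).eq_or_lt with h | h
  · rw [← h, potentialDeriv_of_nonpos le_rfl]
    exact ((hu.tailIntegral_eq_zero_iff t).1 h.symm).symm
  rw [potentialDeriv_of_pos h]
  rcases (hu.hittingTime_le le_rfl : hittingTime u (tailIntegral u t) ≤ t).eq_or_lt with heq | hlt
  · rw [heq]
  · have hzero := hu.eq_zero_of_tailIntegral_eq hlt (hu.tailIntegral_hittingTime h)
    rw [hzero]
    exact le_antisymm (hu.nonneg t) (hzero ▸ hu.antitone hlt.le)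

theorem monotone_potentialDeriv (hu : IsSpeedProfile u) : Monotone (potentialDeriv u) := by
  intro y z hyz
  rcases le_or_gt z 0 with hz | hz
  · rw [potentialDeriv_of_nonpos hz, potentialDeriv_of_nonpos (hyz.trans hz)]
    exact hyz
  rcases le_or_gt y 0 with hy | hy
  · rw [potentialDeriv_of_nonpos hy]
    exact hy.trans (hu.potentialDeriv_pos hz).le
  rw [potentialDeriv_of_pos hy, potentialDeriv_of_pos hz]
  exact hu.antitone (hu.hittingTime_antitoneOn hy hz hyz)

theorem surjective_potentialDeriv (hu : IsSpeedProfile u) :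
    Function.Surjective (potentialDeriv u) := by
  intro c
  rcases le_or_gt c 0 with hc | hc
  · exact ⟨c, potentialDeriv_of_nonpos hc⟩
  obtain ⟨b, hb⟩ := hu.exists_lt hc
  obtain ⟨a, ha⟩ := (hu.tendsto_atBot.eventually_ge_atTop c).exists
  obtain ⟨t, rfl⟩ := intermediate_value_univ b a hu.continuous ⟨hb.le, ha⟩
  exact ⟨tailIntegral u t, hu.potentialDeriv_tailIntegral t⟩

theorem continuous_potentialDeriv (hu : IsSpeedProfile u) : Continuous (potentialDeriv u) :=
  hu.monotone_potentialDeriv.continuous_of_surjective hu.surjective_potentialDeriv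

theorem hasDerivAt_potential (hu : IsSpeedProfile u) (y : ℝ) :
    HasDerivAt (potential u) (potentialDeriv u y) y :=
  (hu.continuous_potentialDeriv.integral_hasStrictDerivAt 0 y).hasDerivAt

theorem deriv_potential (hu : IsSpeedProfile u) : deriv (potential u) = potentialDeriv u :=
  funext fun y => (hu.hasDerivAt_potential y).deriv

theorem differentiable_potential (hu : IsSpeedProfile u) : Differentiable ℝ (potential u) :=
  fun y => (hu.hasDerivAt_potential y).differentiableAt

theorem convexOn_potential (hu : IsSpeedProfile u) : ConvexOn ℝ univ (potential u) :=
  Monotone.convexOn_univ_of_deriv hu.differentiable_potential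
    (hu.deriv_potential ▸ hu.monotone_potentialDeriv)

theorem contDiff_potential (hu : IsSpeedProfile u) : ContDiff ℝ 1 (potential u) :=
  contDiff_one_iff_deriv.2 ⟨hu.differentiable_potential,
    hu.deriv_potential ▸ hu.continuous_potentialDeriv⟩

theorem potential_pos (hu : IsSpeedProfile u) {y : ℝ} (hy : y ≠ 0) : 0 < potential u y := by
  have hint := hu.continuous_potentialDeriv.intervalIntegrable (μ := volume)
  rcases hy.lt_or_gt with hy | hy
  · have := intervalIntegral.intervalIntegral_pos_of_pos_on (f := fun z => -potentialDeriv u z)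
      (hint y 0).neg
      (fun z hz => neg_pos.2 ((potentialDeriv_of_nonpos hz.2.le).trans_lt hz.2)) hy
    rw [intervalIntegral.integral_neg] at this
    rw [potential, intervalIntegral.integral_symm]
    exact this
  · exact intervalIntegral.intervalIntegral_pos_of_pos_on (hint 0 y)
      (fun z hz => hu.potentialDeriv_pos hz.1) hy

theorem potential_nonneg (hu : IsSpeedProfile u) (y : ℝ) : 0 ≤ potential u y := by
  rcases eq_or_ne y 0 with rfl | hy
  · exact potential_zero.ge
  · exact (hu.potential_pos hy).le

theorem potential_eq_zero_iff (hu : IsSpeedProfile u) (y : ℝ) : potential u y = 0 ↔ y = 0 :=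
  ⟨fun h => by_contra fun hy => (hu.potential_pos hy).ne' h, fun h => by rw [h, potential_zero]⟩

theorem potential_tailIntegral (hu : IsSpeedProfile u) (t : ℝ) :
    potential u (tailIntegral u t) = ∫ s in Ioi t, u s ^ 2 := by
  have hderiv : ∀ s ∈ Ici t,
      HasDerivAt (fun r => potential u (tailIntegral u r)) (-(u s ^ 2)) s := fun s _ => by
    have h := (hu.hasDerivAt_potential _).comp s (hu.hasDerivAt_tailIntegral s)
    rwa [hu.potentialDeriv_tailIntegral, mul_neg, ← sq] at h
  have hlim : Tendsto (fun r => potential u (tailIntegral u r)) atTop (𝓝 0) := by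
    have h := (hu.differentiable_potential.continuous.tendsto 0).comp
      (tendsto_tailIntegral_atTop (u := u))
    rwa [potential_zero] at h
  have := integral_Ioi_of_hasDerivAt_of_nonpos' hderiv
    (fun s _ => neg_nonpos.2 (sq_nonneg (u s))) hlim
  rw [integral_neg] at this
  linarith

end IsSpeedProfile

end

section DecayProfile

variable {g : ℝ → ℝ}

theorem deriv_nonpos_of_antitoneOn_Ici {a t : ℝ} (hgd : DifferentiableAt ℝ g t)
    (hmono : AntitoneOn g (Ici a)) (ht : a ≤ t) : deriv g t ≤ 0 :=
  hgd.hasDerivAt.hasDerivWithinAt.nonpos_of_antitoneOn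
    (uniqueDiffWithinAt_iff_accPt.1 (uniqueDiffOn_Ici a t ht)) hmono

/-- `√(-g')` on `[0, ∞)`, continued to negative times so that it is unbounded: this makes
`potentialDeriv` onto, hence continuous. -/
noncomputable def decaySpeed (g : ℝ → ℝ) (t : ℝ) : ℝ :=
  √(-deriv g (max t 0)) + max (-t) 0

theorem decaySpeed_of_nonneg {t : ℝ} (ht : 0 ≤ t) : decaySpeed g t = √(-deriv g t) := by
  rw [decaySpeed, max_eq_left ht, max_eq_right (neg_nonpos.2 ht), add_zero]

theorem decaySpeed_sq (hgd : Differentiable ℝ g) (hmono : AntitoneOn g (Ici 0)) {t : ℝ}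
    (ht : 0 ≤ t) : decaySpeed g t ^ 2 = -deriv g t := by
  rw [decaySpeed_of_nonneg ht, Real.sq_sqrt
    (neg_nonneg.2 (deriv_nonpos_of_antitoneOn_Ici (hgd t) hmono ht))]

theorem isSpeedProfile_decaySpeed (hg : ContDiff ℝ 2 g) (hconv : ConvexOn ℝ (Ici 0) g)
    (hint : IntegrableOn (fun t => √(-deriv g t)) (Ioi 0)) : IsSpeedProfile (decaySpeed g) where
  continuous := by
    have := hg.continuous_deriv one_le_two
    unfold decaySpeed
    fun_prop
  antitone := fun s t hst => add_le_add
    (Real.sqrt_le_sqrt (neg_le_neg (hconv.monotoneOn_deriv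
      (fun x _ => (hg.differentiable two_ne_zero).differentiableAt) (le_max_right s 0)
      (le_max_right t 0) (max_le_max_right 0 hst))))
    (max_le_max_right 0 (neg_le_neg hst))
  nonneg t := add_nonneg (Real.sqrt_nonneg _) (le_max_right _ _)
  integrableOn_Ioi_zero :=
    hint.congr_fun (fun t ht => (decaySpeed_of_nonneg (le_of_lt ht)).symm) measurableSet_Ioi
  tendsto_atBot := tendsto_atTop_mono (fun t => le_add_of_nonneg_left (Real.sqrt_nonneg _))
    (tendsto_atTop_mono (fun t => le_max_left (-t) 0) tendsto_neg_atBot_atTop)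

theorem eq_integral_decaySpeed_sq (hg : ContDiff ℝ 2 g) (hmono : AntitoneOn g (Ici 0))
    (hlim : Tendsto g atTop (𝓝 0)) {t : ℝ} (ht : 0 ≤ t) :
    g t = ∫ s in Ioi t, decaySpeed g s ^ 2 := by
  have hgd := hg.differentiable two_ne_zero
  have hderiv_nonpos : ∀ s ∈ Ioi t, deriv g s ≤ 0 := fun s hs =>
    deriv_nonpos_of_antitoneOn_Ici (hgd s) hmono (ht.trans (le_of_lt hs))
  have := integral_Ioi_of_hasDerivAt_of_nonpos' (fun s _ => (hgd s).hasDerivAt)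
    hderiv_nonpos hlim
  rw [setIntegral_congr_fun measurableSet_Ioi
    (fun s hs => decaySpeed_sq hgd hmono (ht.trans (le_of_lt hs))), integral_neg, this]
  ring

end DecayProfile

theorem convex_decay_realized_by_gradient_flow_general
    (g : ℝ → ℝ) (hg : ContDiff ℝ 2 g)
    (hmono : AntitoneOn g (Set.Ici 0))
    (hconv : ConvexOn ℝ (Set.Ici 0) g)
    (hlim : Filter.Tendsto g Filter.atTop (nhds 0))
    (hint : MeasureTheory.IntegrableOn (fun t => Real.sqrt (-(deriv g t))) (Set.Ioi 0)) :
    ∃ φ : ℝ → ℝ, ConvexOn ℝ Set.univ φ ∧ ContDiff ℝ 1 φ ∧ (∀ y, 0 ≤ φ y) ∧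
      (∀ y, φ y = 0 ↔ y = 0) ∧
      ∃ x : ℝ → ℝ,
        (∀ t ∈ Set.Ici (0:ℝ), HasDerivWithinAt x (-(deriv φ (x t))) (Set.Ici 0) t) ∧
        ∀ t ∈ Set.Ici (0:ℝ), φ (x t) = g t := by
  have hu := isSpeedProfile_decaySpeed hg hconv hint
  refine ⟨potential (decaySpeed g), hu.convexOn_potential, hu.contDiff_potential,
    hu.potential_nonneg, hu.potential_eq_zero_iff, tailIntegral (decaySpeed g),
    fun t _ => ?_, fun t ht => ?_⟩
  · rw [hu.deriv_potential, hu.potentialDeriv_tailIntegral]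
    exact (hu.hasDerivAt_tailIntegral t).hasDerivWithinAt
  · rw [hu.potential_tailIntegral, eq_integral_decaySpeed_sq hg hmono hlim ht]

/-- Any monotone decreasing, convex, non-negative C² function `g` on
`[0,∞)` with `g(t) → 0` and `∫₀^∞ √(−g'(t)) dt < ∞` arises as the energy decay curve
of the gradient flow of a convex C¹ function `φ : ℝ → [0,∞)` which vanishes exactly
at `0`, i.e. `φ(x(t)) = g(t)` along some gradient flow `x` of `φ`. -/
theorem convex_decay_realized_by_gradient_flow
    (g : ℝ → ℝ) (hg : ContDiff ℝ 2 g)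
    (hnonneg : ∀ t ∈ Set.Ici (0:ℝ), 0 ≤ g t)
    (hmono : AntitoneOn g (Set.Ici 0))
    (hconv : ConvexOn ℝ (Set.Ici 0) g)
    (hlim : Filter.Tendsto g Filter.atTop (nhds 0))
    (hint : MeasureTheory.IntegrableOn (fun t => Real.sqrt (-(deriv g t))) (Set.Ioi 0)) :
    ∃ φ : ℝ → ℝ, ConvexOn ℝ Set.univ φ ∧ ContDiff ℝ 1 φ ∧ (∀ y, 0 ≤ φ y) ∧
      (∀ y, φ y = 0 ↔ y = 0) ∧
      ∃ x : ℝ → ℝ,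
        (∀ t ∈ Set.Ici (0:ℝ), HasDerivWithinAt x (-(deriv φ (x t))) (Set.Ici 0) t) ∧
        ∀ t ∈ Set.Ici (0:ℝ), φ (x t) = g t :=
  convex_decay_realized_by_gradient_flow_general g hg hmono hconv hlim hint
end

section
/- Let g : (0,∞) → [0,∞) be a convex, differentiable, monotone decreasing function with lim_{t→∞} g(t) = 0. Then for every t > 0, g(t) ≤ (∫₀^∞ √(−g'(s)) ds)² / (4t). -/
/-!
Put `φ = -g'`, which is nonnegative and, by convexity, antitone, and let `a = √(φ t)`.
Since `g` vanishes at infinity, `g t = ∫_t^∞ φ`. On `(t, ∞)` we have `φ ≤ a √φ`, so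
`g t ≤ a Y` with `Y = ∫_t^∞ √φ`; on `(0, t]` we have `√φ ≥ a`, so `t a ≤ X = ∫_0^t √φ`.
Hence `4 t g t ≤ 4 X Y ≤ (X + Y)²` by AM-GM.
-/

open Filter MeasureTheory Set
open scoped ENNReal NNReal Topology

theorem ENNReal.four_mul_le_sq_add (a b : ℝ≥0∞) : 4 * a * b ≤ (a + b) ^ 2 := by
  rcases eq_or_ne a ⊤ with rfl | ha
  · rcases eq_or_ne b 0 with rfl | hb <;> simp [*]
  rcases eq_or_ne b ⊤ with rfl | hb
  · simp
  lift a to ℝ≥0 using ha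
  lift b to ℝ≥0 using hb
  exact_mod_cast _root_.four_mul_le_sq_add a b

namespace AntitoneOn

variable {φ : ℝ → ℝ} {t : ℝ}

theorem ofReal_mul_ofReal_sqrt_le_lintegral_Ioc (hφ : AntitoneOn φ (Ioi 0)) (ht : 0 < t) :
    ENNReal.ofReal t * ENNReal.ofReal √(φ t) ≤
      ∫⁻ s in Ioc 0 t, ENNReal.ofReal √(φ s) := by
  calc ENNReal.ofReal t * ENNReal.ofReal √(φ t)
      = ∫⁻ _ in Ioc 0 t, ENNReal.ofReal √(φ t) := by
        rw [setLIntegral_const, Real.volume_Ioc, sub_zero, mul_comm]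
    _ ≤ ∫⁻ s in Ioc 0 t, ENNReal.ofReal √(φ s) :=
        setLIntegral_mono' measurableSet_Ioc fun s hs =>
          ENNReal.ofReal_le_ofReal (Real.sqrt_le_sqrt (hφ hs.1 ht hs.2))

theorem lintegral_Ioi_le_ofReal_sqrt_mul (hφ : AntitoneOn φ (Ioi 0)) (ht : 0 < t) :
    ∫⁻ s in Ioi t, ENNReal.ofReal (φ s) ≤
      ENNReal.ofReal √(φ t) * ∫⁻ s in Ioi t, ENNReal.ofReal √(φ s) := by
  rw [← lintegral_const_mul' _ _ ENNReal.ofReal_ne_top]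
  refine setLIntegral_mono' measurableSet_Ioi fun s hs => ?_
  have hφts : φ s ≤ φ t := hφ ht (ht.trans hs) hs.le
  calc ENNReal.ofReal (φ s)
      ≤ ENNReal.ofReal (√(φ s) * √(φ s)) := by
        rcases le_total 0 (φ s) with h | h
        · rw [Real.mul_self_sqrt h]
        · simp [ENNReal.ofReal_of_nonpos h]
    _ ≤ ENNReal.ofReal √(φ t) * ENNReal.ofReal √(φ s) := by
        rw [← ENNReal.ofReal_mul (Real.sqrt_nonneg _)]
        gcongr

theorem four_mul_mul_lintegral_Ioi_le_sq_lintegral_sqrt (hφ : AntitoneOn φ (Ioi 0))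
    (ht : 0 < t) :
    4 * ENNReal.ofReal t * ∫⁻ s in Ioi t, ENNReal.ofReal (φ s) ≤
      (∫⁻ s in Ioi 0, ENNReal.ofReal √(φ s)) ^ 2 := by
  rw [← Ioc_union_Ioi_eq_Ioi ht.le, lintegral_union measurableSet_Ioi Ioc_disjoint_Ioi_same]
  calc 4 * ENNReal.ofReal t * ∫⁻ s in Ioi t, ENNReal.ofReal (φ s)
      ≤ 4 * ENNReal.ofReal t *
          (ENNReal.ofReal √(φ t) * ∫⁻ s in Ioi t, ENNReal.ofReal √(φ s)) := by
        gcongr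
        exact hφ.lintegral_Ioi_le_ofReal_sqrt_mul ht
    _ = 4 * (ENNReal.ofReal t * ENNReal.ofReal √(φ t)) *
          ∫⁻ s in Ioi t, ENNReal.ofReal √(φ s) := by ring
    _ ≤ 4 * (∫⁻ s in Ioc 0 t, ENNReal.ofReal √(φ s)) *
          ∫⁻ s in Ioi t, ENNReal.ofReal √(φ s) := by
        gcongr
        exact hφ.ofReal_mul_ofReal_sqrt_le_lintegral_Ioc ht
    _ ≤ _ := ENNReal.four_mul_le_sq_add _ _

end AntitoneOn

theorem lintegral_Ioi_neg_deriv_eq_ofReal {g : ℝ → ℝ} {a l : ℝ}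
    (hg : ∀ x ∈ Ici a, DifferentiableAt ℝ g x) (hg' : ∀ x ∈ Ioi a, deriv g x ≤ 0)
    (hlim : Tendsto g atTop (𝓝 l)) :
    ∫⁻ x in Ioi a, ENNReal.ofReal (-deriv g x) = ENNReal.ofReal (g a - l) := by
  have hderiv : ∀ x ∈ Ici a, HasDerivAt g (deriv g x) x := fun x hx => (hg x hx).hasDerivAt
  have hint : IntegrableOn (fun x => -deriv g x) (Ioi a) :=
    (integrableOn_Ioi_deriv_of_nonpos' hderiv hg' hlim).neg
  rw [← ofReal_integral_eq_lintegral_ofReal hint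
      ((ae_restrict_iff' measurableSet_Ioi).2 (ae_of_all _ fun x hx => neg_nonneg.2 (hg' x hx))),
    integral_neg, integral_Ioi_of_hasDerivAt_of_nonpos' hderiv hg' hlim, neg_sub]

theorem convex_decay_length_bound_general
    (g : ℝ → ℝ)
    (hconv : ConvexOn ℝ (Set.Ioi 0) g)
    (hdiff : DifferentiableOn ℝ g (Set.Ioi 0))
    (hmono : AntitoneOn g (Set.Ioi 0))
    (hlim : Filter.Tendsto g Filter.atTop (nhds 0)) :
    ∀ t ∈ Set.Ioi (0:ℝ),
      ENNReal.ofReal (4 * t * g t) ≤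
        (∫⁻ s in Set.Ioi (0:ℝ), ENNReal.ofReal (Real.sqrt (-(deriv g s)))) ^ 2 := by
  intro t (ht : 0 < t)
  have hdiffAt : ∀ s ∈ Ioi (0 : ℝ), DifferentiableAt ℝ g s := fun s hs =>
    hdiff.differentiableAt (isOpen_Ioi.mem_nhds hs)
  have hderiv_nonpos : ∀ s ∈ Ioi (0 : ℝ), deriv g s ≤ 0 := fun s hs => by
    rw [← derivWithin_of_isOpen isOpen_Ioi hs]
    exact hmono.derivWithin_nonpos
  have hanti : AntitoneOn (fun s => -deriv g s) (Ioi 0) := (hconv.monotoneOn_deriv hdiffAt).neg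
  calc ENNReal.ofReal (4 * t * g t) = 4 * ENNReal.ofReal t * ENNReal.ofReal (g t - 0) := by
        rw [sub_zero, ENNReal.ofReal_mul (by positivity), ENNReal.ofReal_mul (by norm_num)]
        norm_num
    _ = 4 * ENNReal.ofReal t * ∫⁻ s in Ioi t, ENNReal.ofReal (-deriv g s) := by
        rw [lintegral_Ioi_neg_deriv_eq_ofReal (fun s hs => hdiffAt s (ht.trans_le hs))
          (fun s hs => hderiv_nonpos s (ht.trans hs)) hlim]
    _ ≤ _ := hanti.four_mul_mul_lintegral_Ioi_le_sq_lintegral_sqrt ht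

/-- For a convex, differentiable, monotone decreasing function
`g : (0,∞) → [0,∞)` with `g(t) → 0` at infinity, one has
`g(t) ≤ (∫₀^∞ √(−g'(s)) ds)² / (4t)` for every `t > 0` (stated multiplied out in
`[0,∞]`, so that it is trivially true when the integral is infinite). -/
theorem convex_decay_length_bound
    (g : ℝ → ℝ)
    (hconv : ConvexOn ℝ (Set.Ioi 0) g)
    (hdiff : DifferentiableOn ℝ g (Set.Ioi 0))
    (hnonneg : ∀ t ∈ Set.Ioi (0:ℝ), 0 ≤ g t)
    (hmono : AntitoneOn g (Set.Ioi 0))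
    (hlim : Filter.Tendsto g Filter.atTop (nhds 0)) :
    ∀ t ∈ Set.Ioi (0:ℝ),
      ENNReal.ofReal (4 * t * g t) ≤
        (∫⁻ s in Set.Ioi (0:ℝ), ENNReal.ofReal (Real.sqrt (-(deriv g s)))) ^ 2 :=
  convex_decay_length_bound_general g hconv hdiff hmono hlim
end

section
/- Let g : (0,∞) → [0,∞) be a convex, differentiable, monotone decreasing function with lim_{t→∞} g(t) = 0 and ∫₀^∞ √(−g'(s)) ds < ∞. Then for every t > 0, g(t) ≤ √(−g'(t)) · ∫₀^∞ √(−g'(s)) ds; in particular, ∫₀^∞ g(t) dt < ∞. -/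
/-!
Convexity makes `-g'` nonincreasing, so for `s ≥ t` we have
`-g'(s) = √(-g'(s)) · √(-g'(s)) ≤ √(-g'(t)) · √(-g'(s))`. Integrating over `(t, ∞)` and using
`g(t) = ∫ₜ^∞ -g'` (as `g → 0`) gives the pointwise bound, and that bound dominates `g` by a
constant multiple of the integrable function `√(-g')`.
-/

open Filter MeasureTheory Set

lemma le_sqrt_mul_sqrt_of_le {a b : ℝ} (hba : b ≤ a) : b ≤ √a * √b := by
  rcases le_or_gt 0 b with hb | hb
  · calc b = √b * √b := (Real.mul_self_sqrt hb).symm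
      _ ≤ √a * √b := by gcongr
  · exact hb.le.trans (by positivity)

section TailBound

variable {g : ℝ → ℝ} {t : ℝ}

lemma neg_deriv_le_sqrt_mul_sqrt (hmd : MonotoneOn (deriv g) (Ici t)) {s : ℝ} (hs : s ∈ Ici t) :
    -deriv g s ≤ √(-deriv g t) * √(-deriv g s) :=
  le_sqrt_mul_sqrt_of_le (neg_le_neg (hmd self_mem_Ici hs hs))

lemma integrableOn_Ioi_deriv_of_integrableOn_sqrt (hmd : MonotoneOn (deriv g) (Ici t))
    (hnp : ∀ s ∈ Ici t, deriv g s ≤ 0)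
    (hint : IntegrableOn (fun s => √(-deriv g s)) (Ioi t)) :
    IntegrableOn (deriv g) (Ioi t) := by
  refine (hint.const_mul √(-deriv g t)).mono' (measurable_deriv g).aestronglyMeasurable ?_
  filter_upwards [ae_restrict_mem measurableSet_Ioi] with s hs
  rw [Real.norm_of_nonpos (hnp s (mem_Ici_of_Ioi hs))]
  exact neg_deriv_le_sqrt_mul_sqrt hmd (mem_Ici_of_Ioi hs)

lemma integral_Ioi_neg_deriv (hd : ∀ s ∈ Ici t, DifferentiableAt ℝ g s)
    (hg' : IntegrableOn (deriv g) (Ioi t)) (hlim : Tendsto g atTop (nhds 0)) :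
    ∫ s in Ioi t, -deriv g s = g t := by
  rw [integral_neg, integral_Ioi_of_hasDerivAt_of_tendsto
    (hd t self_mem_Ici).continuousAt.continuousWithinAt
    (fun s hs => (hd s (mem_Ici_of_Ioi hs)).hasDerivAt) hg' hlim]
  ring

theorem le_sqrt_neg_deriv_mul_integral_Ioi (hd : ∀ s ∈ Ici t, DifferentiableAt ℝ g s)
    (hmd : MonotoneOn (deriv g) (Ici t)) (hnp : ∀ s ∈ Ici t, deriv g s ≤ 0)
    (hlim : Tendsto g atTop (nhds 0))
    (hint : IntegrableOn (fun s => √(-deriv g s)) (Ioi t)) :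
    g t ≤ √(-deriv g t) * ∫ s in Ioi t, √(-deriv g s) := by
  have hg' := integrableOn_Ioi_deriv_of_integrableOn_sqrt hmd hnp hint
  calc g t = ∫ s in Ioi t, -deriv g s := (integral_Ioi_neg_deriv hd hg' hlim).symm
    _ ≤ ∫ s in Ioi t, √(-deriv g t) * √(-deriv g s) :=
      setIntegral_mono_on hg'.neg (hint.const_mul _) measurableSet_Ioi
        fun s hs => neg_deriv_le_sqrt_mul_sqrt hmd (mem_Ici_of_Ioi hs)
    _ = √(-deriv g t) * ∫ s in Ioi t, √(-deriv g s) := integral_const_mul _ _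

end TailBound

/-- For a convex, differentiable, monotone decreasing function
`g : (0,∞) → [0,∞)` with `g(t) → 0` at infinity and `∫₀^∞ √(−g'(s)) ds < ∞`, one has
`g(t) ≤ √(−g'(t)) · ∫₀^∞ √(−g'(s)) ds` for every `t > 0`; in particular `g` is
integrable on `(0,∞)`. -/
theorem convex_decay_integrable_of_sqrt_deriv_integrable
    (g : ℝ → ℝ)
    (hconv : ConvexOn ℝ (Set.Ioi 0) g)
    (hdiff : DifferentiableOn ℝ g (Set.Ioi 0))
    (hnonneg : ∀ t ∈ Set.Ioi (0:ℝ), 0 ≤ g t)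
    (hmono : AntitoneOn g (Set.Ioi 0))
    (hlim : Filter.Tendsto g Filter.atTop (nhds 0))
    (hint : MeasureTheory.IntegrableOn (fun s => Real.sqrt (-(deriv g s))) (Set.Ioi 0)) :
    (∀ t ∈ Set.Ioi (0:ℝ),
      g t ≤ Real.sqrt (-(deriv g t)) * ∫ s in Set.Ioi (0:ℝ), Real.sqrt (-(deriv g s))) ∧
    MeasureTheory.IntegrableOn g (Set.Ioi 0) := by
  have hd : ∀ s ∈ Ioi (0 : ℝ), DifferentiableAt ℝ g s := fun s hs =>
    hdiff.differentiableAt (isOpen_Ioi.mem_nhds hs)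
  have hmd : MonotoneOn (deriv g) (Ioi 0) := hconv.monotoneOn_deriv hd
  have hnp : ∀ s ∈ Ioi (0 : ℝ), deriv g s ≤ 0 := fun s hs =>
    (derivWithin_of_isOpen (f := g) isOpen_Ioi hs) ▸ hmono.derivWithin_nonpos
  have hbound : ∀ t ∈ Ioi (0 : ℝ), g t ≤ √(-deriv g t) * ∫ s in Ioi 0, √(-deriv g s) := by
    intro t ht
    have hsub : Ici t ⊆ Ioi 0 := Ici_subset_Ioi.2 ht
    calc g t ≤ √(-deriv g t) * ∫ s in Ioi t, √(-deriv g s) :=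
          le_sqrt_neg_deriv_mul_integral_Ioi (fun s hs => hd s (hsub hs)) (hmd.mono hsub)
            (fun s hs => hnp s (hsub hs)) hlim (hint.mono_set (Ioi_subset_Ici_self.trans hsub))
      _ ≤ √(-deriv g t) * ∫ s in Ioi 0, √(-deriv g s) :=
          mul_le_mul_of_nonneg_left (setIntegral_mono_set hint
            (Eventually.of_forall fun s => Real.sqrt_nonneg _) (Ioi_subset_Ioi ht.le).eventuallyLE)
            (Real.sqrt_nonneg _)
  refine ⟨hbound, (hint.mul_const (∫ s in Ioi 0, √(-deriv g s))).mono'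
    (hdiff.continuousOn.aestronglyMeasurable measurableSet_Ioi) ?_⟩
  filter_upwards [ae_restrict_mem measurableSet_Ioi] with t ht
  rw [Real.norm_of_nonneg (hnonneg t ht)]
  exact hbound t ht
end

section
/- Let g, G : [0,∞) → [0,∞) be decreasing, differentiable, convex functions with g(t) > 0 for all t, lim_{t→∞} g(t) = lim_{t→∞} G(t) = 0, and liminf_{t→∞} G(t)/g(t) > 0. If ∫₁^∞ √(−g'(t)) dt = +∞, then ∫₁^∞ √(−G'(t)) dt = +∞. -/
/-!
If `h` is convex on `[0, ∞)`, then `-h'` is nonincreasing there. On the dyadic block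
`(2ⁿ, 2ⁿ⁺¹]` this bounds `∫ √(-h')` above by `2 √(2ⁿ⁻¹ h(2ⁿ⁻¹))` when `h ≥ 0`, and below by
`√(2ⁿ⁺¹ Δₙ₊₁) / 2`, where `Δₘ = h(2ᵐ) - h(2ᵐ⁺¹)`. So `∫₁^∞ √(-g') = ∞` forces
`∑ √(2ⁿ g(2ⁿ)) = ∞`, and by the liminf hypothesis `∑ √(2ⁿ G(2ⁿ)) = ∞`. But when `G → 0`,
`√G(2ⁿ) ≤ ∑_{m ≥ n} √Δₘ`, and summing against the geometric weights `√2ⁿ` gives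
`∑ √(2ⁿ G(2ⁿ)) ≤ (2 + √2) ∑ √(2ᵐ Δₘ)`, which is finite if `∫₁^∞ √(-G')` is.
-/

open Filter MeasureTheory Set Topology
open scoped ENNReal

-- Valid for all reals because `Real.sqrt` is `0` on negative arguments.
theorem Real.sqrt_le_sqrt_sub_add_sqrt (x y : ℝ) : √x ≤ √(x - y) + √y := by
  rw [Real.sqrt_le_iff]
  refine ⟨by positivity, ?_⟩
  nlinarith [Real.sq_sqrt' (x := x - y), Real.sq_sqrt' (x := y), le_max_left (x - y) 0,
    le_max_left y 0, mul_nonneg (Real.sqrt_nonneg (x - y)) (Real.sqrt_nonneg y)]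

theorem ENNReal.le_tsum_of_le_add_succ {u e : ℕ → ℝ≥0∞} (h : ∀ n, u n ≤ e n + u (n + 1))
    (hu : Tendsto u atTop (𝓝 0)) : u 0 ≤ ∑' n, e n := by
  have partial_sums : ∀ N, u 0 ≤ ∑ n ∈ Finset.range N, e n + u N := by
    intro N
    induction N with
    | zero => simp
    | succ N ih =>
      calc u 0 ≤ ∑ n ∈ Finset.range N, e n + u N := ih
        _ ≤ ∑ n ∈ Finset.range N, e n + (e N + u (N + 1)) := by gcongr; exact h N
        _ = ∑ n ∈ Finset.range (N + 1), e n + u (N + 1) := by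
          rw [Finset.sum_range_succ, add_assoc]
  have hlim := (ENNReal.tendsto_nat_tsum e).add hu
  rw [add_zero] at hlim
  exact ge_of_tendsto' hlim partial_sums

theorem ENNReal.tsum_pow_mul_tsum_add_le {w : ℝ≥0∞} (hw₀ : w ≠ 0) (hw : w ≠ ∞) (e : ℕ → ℝ≥0∞) :
    ∑' n, w ^ n * ∑' k, e (n + k) ≤ (1 - w⁻¹)⁻¹ * ∑' m, w ^ m * e m := by
  have hcancel : ∀ n k, w ^ n * e (n + k) = w⁻¹ ^ k * (w ^ (n + k) * e (n + k)) := by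
    intro n k
    calc w ^ n * e (n + k) = ((w ^ k)⁻¹ * w ^ k) * (w ^ n * e (n + k)) := by
          rw [ENNReal.inv_mul_cancel (pow_ne_zero k hw₀) (ENNReal.pow_ne_top hw), one_mul]
      _ = w⁻¹ ^ k * (w ^ (n + k) * e (n + k)) := by rw [pow_add, ← ENNReal.inv_pow]; ring
  calc ∑' n, w ^ n * ∑' k, e (n + k)
      = ∑' k, w⁻¹ ^ k * ∑' n, w ^ (n + k) * e (n + k) := by
        simp_rw [← ENNReal.tsum_mul_left, hcancel]
        exact ENNReal.tsum_comm
    _ ≤ ∑' k, w⁻¹ ^ k * ∑' m, w ^ m * e m := by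
        refine ENNReal.tsum_le_tsum fun k => mul_le_mul_right ?_ _
        exact ENNReal.tsum_comp_le_tsum_of_injective (add_left_injective k) fun m => w ^ m * e m
    _ = (1 - w⁻¹)⁻¹ * ∑' m, w ^ m * e m := by
        rw [ENNReal.tsum_mul_right, ENNReal.tsum_geometric]

theorem summable_of_tsum_ofReal_ne_top {ι : Type*} {f : ι → ℝ} (hf : ∀ i, 0 ≤ f i)
    (h : ∑' i, ENNReal.ofReal (f i) ≠ ∞) : Summable f :=
  (ENNReal.summable_toReal h).congr fun i => ENNReal.toReal_ofReal (hf i)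

theorem ENNReal.ofReal_sqrt_two_pow_mul (n : ℕ) (y : ℝ) :
    ENNReal.ofReal √(2 ^ n * y) = ENNReal.ofReal √2 ^ n * ENNReal.ofReal √y := by
  have hpow : (2 : ℝ) ^ n = (√2 ^ n) ^ 2 := by
    rw [← pow_mul, mul_comm, pow_mul, Real.sq_sqrt zero_le_two]
  rw [Real.sqrt_mul (by positivity), hpow, Real.sqrt_sq (by positivity),
    ENNReal.ofReal_mul (by positivity), ENNReal.ofReal_pow (Real.sqrt_nonneg 2)]

theorem ENNReal.ofReal_sqrt_le_tsum_sqrt_sub {x : ℕ → ℝ} (hx : Tendsto x atTop (𝓝 0)) (n : ℕ) :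
    ENNReal.ofReal √(x n) ≤ ∑' k, ENNReal.ofReal √(x (n + k) - x (n + k + 1)) := by
  refine ENNReal.le_tsum_of_le_add_succ (u := fun k => ENNReal.ofReal √(x (n + k))) (fun k => ?_) ?_
  · rw [← ENNReal.ofReal_add (Real.sqrt_nonneg _) (Real.sqrt_nonneg _)]
    exact ENNReal.ofReal_le_ofReal (Real.sqrt_le_sqrt_sub_add_sqrt _ _)
  · have := (Real.continuous_sqrt.tendsto 0).comp (hx.comp (tendsto_add_atTop_nat n))
    simpa [add_comm] using ENNReal.tendsto_ofReal this

theorem summable_sqrt_two_pow_mul_of_summable_sqrt_two_pow_mul_sub {x : ℕ → ℝ}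
    (hx : Tendsto x atTop (𝓝 0)) (hsum : Summable fun n => √(2 ^ n * (x n - x (n + 1)))) :
    Summable fun n => √(2 ^ n * x n) := by
  set w := ENNReal.ofReal √2
  have hw : 1 < w := ENNReal.one_lt_ofReal.2 Real.one_lt_sqrt_two
  have hC : (1 - w⁻¹)⁻¹ ≠ ∞ := ENNReal.inv_ne_top.2 (tsub_pos_of_lt (ENNReal.inv_lt_one.2 hw)).ne'
  refine summable_of_tsum_ofReal_ne_top (fun n => Real.sqrt_nonneg _)
    (ne_top_of_le_ne_top (ENNReal.mul_ne_top hC hsum.tsum_ofReal_ne_top) ?_)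
  calc ∑' n, ENNReal.ofReal √(2 ^ n * x n) = ∑' n, w ^ n * ENNReal.ofReal √(x n) := by
        simp_rw [ENNReal.ofReal_sqrt_two_pow_mul, w]
    _ ≤ ∑' n, w ^ n * ∑' k, ENNReal.ofReal √(x (n + k) - x (n + k + 1)) :=
        ENNReal.tsum_le_tsum fun n => mul_le_mul_right (ENNReal.ofReal_sqrt_le_tsum_sqrt_sub hx n) _
    _ ≤ (1 - w⁻¹)⁻¹ * ∑' m, w ^ m * ENNReal.ofReal √(x m - x (m + 1)) :=
        ENNReal.tsum_pow_mul_tsum_add_le (zero_lt_one.trans hw).ne' ENNReal.ofReal_ne_top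
          fun m => ENNReal.ofReal √(x m - x (m + 1))
    _ = (1 - w⁻¹)⁻¹ * ∑' m, ENNReal.ofReal √(2 ^ m * (x m - x (m + 1))) := by
        simp_rw [ENNReal.ofReal_sqrt_two_pow_mul, w]

theorem lintegral_Ioi_eq_tsum_Ioc {u : ℕ → ℝ} (hu : Monotone u) (hu_top : Tendsto u atTop atTop)
    (F : ℝ → ℝ≥0∞) : ∫⁻ t in Ioi (u 0), F t = ∑' n, ∫⁻ t in Ioc (u n) (u (n + 1)), F t := by
  have hU := iUnion_Ioc_map_succ_eq_Ioi (fun n => hu (Nat.zero_le n))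
    (not_bddAbove_of_tendsto_atTop hu_top)
  simp only [Order.succ_eq_add_one, Nat.bot_eq_zero] at hU
  rw [← hU, lintegral_iUnion (fun n => measurableSet_Ioc)]
  simpa using hu.pairwise_disjoint_on_Ioc_succ

theorem lintegral_Ioi_one_eq_tsum_Ioc_two_pow (F : ℝ → ℝ≥0∞) :
    ∫⁻ t in Ioi 1, F t = ∑' n : ℕ, ∫⁻ t in Ioc (2 ^ n) (2 * 2 ^ n), F t := by
  have := lintegral_Ioi_eq_tsum_Ioc (u := fun n : ℕ => (2 : ℝ) ^ n)
    (pow_right_mono₀ one_le_two) (tendsto_pow_atTop_atTop_of_one_lt one_lt_two) F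
  simpa only [pow_zero, pow_succ'] using this

theorem setLIntegral_Ioc_ofReal_const {a b : ℝ} (hab : a ≤ b) (C : ℝ) :
    ∫⁻ _ in Ioc a b, ENNReal.ofReal C = ENNReal.ofReal ((b - a) * C) := by
  rw [setLIntegral_const, Real.volume_Ioc, mul_comm, ENNReal.ofReal_mul (sub_nonneg.2 hab)]

theorem ConvexOn.setLIntegral_sqrt_neg_deriv_le {h : ℝ → ℝ} (hconv : ConvexOn ℝ (Ici 0) h)
    (hdiff : DifferentiableOn ℝ h (Ici 0)) {s b c : ℝ} (hs : 0 ≤ s) (hsb : s < b) (hbc : b ≤ c)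
    (hnn : ∀ t ∈ Icc s c, 0 ≤ h t) :
    ∫⁻ t in Ioc b c, ENNReal.ofReal √(-deriv h t) ≤
      ENNReal.ofReal ((c - b) * √(h s / (b - s))) := by
  refine (setLIntegral_mono' measurableSet_Ioc fun t ht => ENNReal.ofReal_le_ofReal
    (Real.sqrt_le_sqrt ?_)).trans_eq (setLIntegral_Ioc_ofReal_const hbc _)
  obtain ⟨hbt, htc⟩ := ht
  have hst : s < t := hsb.trans hbt
  have hslope : slope h s t ≤ deriv h t := hconv.slope_le_deriv hs (hs.trans hst.le) hst
    ((hdiff t (hs.trans hst.le)).differentiableAt (Ici_mem_nhds (hs.trans_lt hst)))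
  rw [slope_def_field] at hslope
  calc -deriv h t ≤ (h s - h t) / (t - s) := by rw [← neg_sub, neg_div]; linarith
    _ ≤ h s / (t - s) :=
        div_le_div_of_nonneg_right (sub_le_self _ (hnn t ⟨hst.le, htc⟩)) (sub_pos.2 hst).le
    _ ≤ h s / (b - s) :=
        div_le_div_of_nonneg_left (hnn s ⟨le_rfl, hsb.le.trans hbc⟩) (sub_pos.2 hsb) (by linarith)

theorem ConvexOn.ofReal_le_setLIntegral_sqrt_neg_deriv {h : ℝ → ℝ} (hconv : ConvexOn ℝ (Ici 0) h)
    (hdiff : DifferentiableOn ℝ h (Ici 0)) {a b c : ℝ} (ha : 0 < a) (hab : a ≤ b) (hbc : b < c) :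
    ENNReal.ofReal ((b - a) * √((h b - h c) / (c - b))) ≤
      ∫⁻ t in Ioc a b, ENNReal.ofReal √(-deriv h t) := by
  refine (setLIntegral_Ioc_ofReal_const hab _).symm.trans_le (setLIntegral_mono' measurableSet_Ioc
    fun t ht => ENNReal.ofReal_le_ofReal (Real.sqrt_le_sqrt ?_))
  have hdiffAt : ∀ x ∈ Ioi (0 : ℝ), DifferentiableAt ℝ h x :=
    fun x (hx : 0 < x) => (hdiff x hx.le).differentiableAt (Ici_mem_nhds hx)
  have hb : 0 < b := ha.trans_le hab
  have hderiv : deriv h t ≤ deriv h b :=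
    (hconv.subset Ioi_subset_Ici_self (convex_Ioi 0)).monotoneOn_deriv hdiffAt
      (ha.trans ht.1) hb ht.2
  have hslope : deriv h b ≤ slope h b c :=
    hconv.deriv_le_slope hb.le (hb.trans hbc).le hbc (hdiffAt b hb)
  rw [slope_def_field] at hslope
  rw [← neg_sub, neg_div]
  linarith

theorem ConvexOn.setLIntegral_sqrt_neg_deriv_Ioc_two_mul_le {h : ℝ → ℝ}
    (hconv : ConvexOn ℝ (Ici 0) h) (hdiff : DifferentiableOn ℝ h (Ici 0)) {s : ℝ} (hs : 0 < s)
    (hnn : ∀ t ∈ Icc s (2 * (2 * s)), 0 ≤ h t) :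
    ∫⁻ t in Ioc (2 * s) (2 * (2 * s)), ENNReal.ofReal √(-deriv h t) ≤
      ENNReal.ofReal (2 * √(s * h s)) := by
  refine (hconv.setLIntegral_sqrt_neg_deriv_le hdiff hs.le (by linarith) (by linarith)
    hnn).trans_eq ?_
  rw [show 2 * (2 * s) - 2 * s = 2 * s by ring, show 2 * s - s = s by ring,
    show s * h s = s ^ 2 * (h s / s) by field_simp, Real.sqrt_mul (sq_nonneg s),
    Real.sqrt_sq hs.le]
  ring_nf

theorem ConvexOn.ofReal_sqrt_two_mul_sub_le_setLIntegral {h : ℝ → ℝ}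
    (hconv : ConvexOn ℝ (Ici 0) h) (hdiff : DifferentiableOn ℝ h (Ici 0)) {s : ℝ} (hs : 0 < s) :
    ENNReal.ofReal √(2 * s * (h (2 * s) - h (2 * (2 * s)))) ≤
      2 * ∫⁻ t in Ioc s (2 * s), ENNReal.ofReal √(-deriv h t) := by
  have key := hconv.ofReal_le_setLIntegral_sqrt_neg_deriv hdiff hs (by linarith)
    (by linarith : 2 * s < 2 * (2 * s))
  rw [show 2 * (2 * s) - 2 * s = 2 * s by ring, show 2 * s - s = s by ring] at key
  have hsqrt : √(2 * s * (h (2 * s) - h (2 * (2 * s)))) =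
      2 * (s * √((h (2 * s) - h (2 * (2 * s))) / (2 * s))) := by
    rw [show 2 * s * (h (2 * s) - h (2 * (2 * s))) =
        (2 * s) ^ 2 * ((h (2 * s) - h (2 * (2 * s))) / (2 * s)) by field_simp,
      Real.sqrt_mul (by positivity), Real.sqrt_sq (by positivity)]
    ring
  rw [hsqrt, ENNReal.ofReal_mul zero_le_two, ENNReal.ofReal_ofNat]
  gcongr

theorem ConvexOn.lintegral_sqrt_neg_deriv_ne_top {h : ℝ → ℝ} (hconv : ConvexOn ℝ (Ici 0) h)
    (hdiff : DifferentiableOn ℝ h (Ici 0)) (hnn : ∀ t ∈ Ici 0, 0 ≤ h t)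
    (hsum : Summable fun n : ℕ => √(2 ^ n * h (2 ^ n))) :
    ∫⁻ t in Ioi 1, ENNReal.ofReal √(-deriv h t) ≠ ∞ := by
  rw [lintegral_Ioi_one_eq_tsum_Ioc_two_pow, tsum_eq_zero_add' ENNReal.summable]
  refine ENNReal.add_ne_top.2 ⟨?_, ne_top_of_le_ne_top (hsum.mul_left 2).tsum_ofReal_ne_top ?_⟩
  · rw [pow_zero, mul_one]
    exact ne_top_of_le_ne_top ENNReal.ofReal_ne_top
      (hconv.setLIntegral_sqrt_neg_deriv_le hdiff le_rfl zero_lt_one one_le_two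
        fun t ht => hnn t ht.1)
  · refine ENNReal.tsum_le_tsum fun n => ?_
    have hs : (0 : ℝ) < 2 ^ n := pow_pos two_pos n
    rw [pow_succ']
    exact hconv.setLIntegral_sqrt_neg_deriv_Ioc_two_mul_le hdiff hs
      fun t ht => hnn t (hs.le.trans ht.1)

theorem ConvexOn.summable_sqrt_two_pow_mul_sub {h : ℝ → ℝ} (hconv : ConvexOn ℝ (Ici 0) h)
    (hdiff : DifferentiableOn ℝ h (Ici 0))
    (hint : ∫⁻ t in Ioi 1, ENNReal.ofReal √(-deriv h t) ≠ ∞) :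
    Summable fun n : ℕ => √(2 ^ n * (h (2 ^ n) - h (2 ^ (n + 1)))) := by
  rw [← summable_nat_add_iff 1]
  refine summable_of_tsum_ofReal_ne_top (fun _ => Real.sqrt_nonneg _)
    (ne_top_of_le_ne_top (ENNReal.mul_ne_top (ENNReal.ofNat_ne_top (n := 2)) hint) ?_)
  rw [lintegral_Ioi_one_eq_tsum_Ioc_two_pow, ← ENNReal.tsum_mul_left]
  refine ENNReal.tsum_le_tsum fun n => ?_
  rw [pow_succ', pow_succ', pow_succ']
  exact hconv.ofReal_sqrt_two_mul_sub_le_setLIntegral hdiff (pow_pos two_pos n)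

theorem sqrt_deriv_integral_comparison_general
    (g G : ℝ → ℝ)
    (hgpos : ∀ t ∈ Set.Ici (0:ℝ), 0 < g t)
    (hgconv : ConvexOn ℝ (Set.Ici 0) g) (hGconv : ConvexOn ℝ (Set.Ici 0) G)
    (hgdiff : DifferentiableOn ℝ g (Set.Ici 0))
    (hGdiff : DifferentiableOn ℝ G (Set.Ici 0))
    (hGlim : Filter.Tendsto G Filter.atTop (nhds 0))
    (hliminf : ∃ c > (0:ℝ), ∀ᶠ t in Filter.atTop, c ≤ G t / g t)
    (hgint : ∫⁻ t in Set.Ioi (1:ℝ), ENNReal.ofReal (Real.sqrt (-(deriv g t))) = ⊤) :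
    ∫⁻ t in Set.Ioi (1:ℝ), ENNReal.ofReal (Real.sqrt (-(deriv G t))) = ⊤ := by
  by_contra hGint
  obtain ⟨c, hc, hcG⟩ := hliminf
  have htwo_pow := tendsto_pow_atTop_atTop_of_one_lt (one_lt_two (α := ℝ))
  have hG_summable : Summable fun n : ℕ => √(2 ^ n * G (2 ^ n)) :=
    summable_sqrt_two_pow_mul_of_summable_sqrt_two_pow_mul_sub (hGlim.comp htwo_pow)
      (hGconv.summable_sqrt_two_pow_mul_sub hGdiff hGint)
  have hg_le : ∀ᶠ n : ℕ in atTop, ‖√(2 ^ n * g (2 ^ n))‖ ≤ √c⁻¹ * √(2 ^ n * G (2 ^ n)) := by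
    filter_upwards [htwo_pow.eventually hcG] with n hn
    rw [le_div_iff₀ (hgpos _ (mem_Ici.2 (pow_nonneg zero_le_two n)))] at hn
    rw [Real.norm_of_nonneg (Real.sqrt_nonneg _), ← Real.sqrt_mul (inv_nonneg.2 hc.le)]
    refine Real.sqrt_le_sqrt ?_
    rw [mul_left_comm]
    gcongr
    rwa [le_inv_mul_iff₀ hc]
  exact hgconv.lintegral_sqrt_neg_deriv_ne_top hgdiff (fun t ht => (hgpos t ht).le)
    (hG_summable.mul_left _ |>.of_norm_bounded_eventually_nat hg_le) hgint

/-- Comparison principle for convex functions with derivative in `L^{1/2}`.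
If `g, G : [0,∞) → [0,∞)` are decreasing, differentiable, convex, `g > 0`, both tend
to `0` at infinity and `liminf_{t→∞} G(t)/g(t) > 0` (i.e. eventually `G/g ≥ c` for
some `c > 0`), then `∫₁^∞ √(−g') = ∞` implies `∫₁^∞ √(−G') = ∞`. -/
theorem sqrt_deriv_integral_comparison
    (g G : ℝ → ℝ)
    (hgpos : ∀ t ∈ Set.Ici (0:ℝ), 0 < g t)
    (hGnonneg : ∀ t ∈ Set.Ici (0:ℝ), 0 ≤ G t)
    (hgmono : AntitoneOn g (Set.Ici 0)) (hGmono : AntitoneOn G (Set.Ici 0))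
    (hgconv : ConvexOn ℝ (Set.Ici 0) g) (hGconv : ConvexOn ℝ (Set.Ici 0) G)
    (hgdiff : DifferentiableOn ℝ g (Set.Ici 0))
    (hGdiff : DifferentiableOn ℝ G (Set.Ici 0))
    (hglim : Filter.Tendsto g Filter.atTop (nhds 0))
    (hGlim : Filter.Tendsto G Filter.atTop (nhds 0))
    (hliminf : ∃ c > (0:ℝ), ∀ᶠ t in Filter.atTop, c ≤ G t / g t)
    (hgint : ∫⁻ t in Set.Ioi (1:ℝ), ENNReal.ofReal (Real.sqrt (-(deriv g t))) = ⊤) :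
    ∫⁻ t in Set.Ioi (1:ℝ), ENNReal.ofReal (Real.sqrt (-(deriv G t))) = ⊤ :=
  sqrt_deriv_integral_comparison_general g G hgpos hgconv hGconv hgdiff hGdiff hGlim hliminf hgint
end

section
/- Let f : ℝ → ℝ be a convex C²-function which attains its infimum at some x* ∈ ℝ, and let x : [0,∞) → ℝ be a gradient flow of f. Then liminf_{t→∞} t·(log t)²·(f(x(t)) − inf f) = 0; equivalently, there do not exist ε > 0 and T > 1 such that f(x(t)) − inf f ≥ ε/(t·(log t)²) for all t ≥ T. -/
/-!
If `f' ∘ x` vanished at some time, `f ∘ x`, which is nonincreasing, would reach `min f` there,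
contradicting the lower bound; so `f' ∘ x` has constant sign, positive after reflecting `y ↦ -y`.
Then `x` and the speed `p = f' ∘ x` both decrease. At the dyadic times `τ_j = T 2^j` put
`α_j = τ_j p(τ_j)` and `G_j = f(x(τ_j)) - min f`. Monotonicity of `p` gives
`α_{j+1} ≤ 2 (x(τ_j) - x(τ_{j+1}))`, so `∑ α_j < ∞`, and with the gradient inequality
`G_j - G_{j+1} ≤ α_j² / τ_j`. As `G_j ≤ p(τ_j) (x(0) - x*) → 0`, summing gives
`τ_k G_k ≤ ∑_i α_{k+i}² 2^{-i}`, and `√(∑ v_i²) ≤ ∑ v_i` turns this into `∑_k √(τ_k G_k) ≤ (1 - 2^{-1/2})⁻¹ ∑ α_j < ∞`. A lower bound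
`G_k ≥ ε / (τ_k log² τ_k)` would make `∑_k 1 / log τ_k = ∑_k 1 / (log T + k log 2)` converge.
-/

open Filter Set Topology

def IsGradientFlow (f x : ℝ → ℝ) : Prop :=
  ∀ t ∈ Ici (0 : ℝ), HasDerivWithinAt x (-(deriv f (x t))) (Ici 0) t

theorem ConvexOn.sub_le_deriv_mul_sub {f : ℝ → ℝ} (hf : ConvexOn ℝ univ f) {z : ℝ}
    (hz : DifferentiableAt ℝ f z) (y : ℝ) : f z - f y ≤ deriv f z * (z - y) := by
  rcases lt_trichotomy z y with h | rfl | h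
  · have := hf.deriv_le_slope (mem_univ z) (mem_univ y) h hz
    rw [slope_def_field, le_div_iff₀ (sub_pos.2 h)] at this
    linarith
  · simp
  · have := hf.slope_le_deriv (mem_univ y) (mem_univ z) h hz
    rwa [slope_def_field, div_le_iff₀ (sub_pos.2 h)] at this

theorem IsPreconnected.pos_or_neg_of_ne_zero {X : Type*} [TopologicalSpace X] {s : Set X}
    {g : X → ℝ} (hs : IsPreconnected s) (hg : ContinuousOn g s) (h0 : ∀ a ∈ s, g a ≠ 0) :
    (∀ a ∈ s, 0 < g a) ∨ (∀ a ∈ s, g a < 0) := by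
  by_contra! ⟨⟨a, ha, hga⟩, ⟨b, hb, hgb⟩⟩
  obtain ⟨c, hc, hgc⟩ := hs.intermediate_value ha hb hg ⟨hga, hgb⟩
  exact h0 c hc hgc

theorem le_tsum_of_sub_succ_le {G b : ℕ → ℝ} (hG : Tendsto G atTop (𝓝 0)) (hb : Summable b)
    (h : ∀ n, G n - G (n + 1) ≤ b n) : G 0 ≤ ∑' n, b n := by
  have hpartial : ∀ n, G 0 - G n ≤ ∑ i ∈ Finset.range n, b i := fun n => by
    rw [← Finset.sum_range_sub']
    exact Finset.sum_le_sum fun i _ => h i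
  simpa using le_of_tendsto_of_tendsto' (tendsto_const_nhds.sub hG) hb.hasSum.tendsto_sum_nat
    hpartial

theorem tsum_sq_le_sq_tsum {v : ℕ → ℝ} (hv0 : ∀ i, 0 ≤ v i) (hv : Summable v) :
    ∑' i, v i ^ 2 ≤ (∑' i, v i) ^ 2 := by
  have hle : ∀ i, v i ^ 2 ≤ v i * ∑' j, v j := fun i =>
    by rw [sq]; exact mul_le_mul_of_nonneg_left (hv.le_tsum i fun j _ => hv0 j) (hv0 i)
  calc ∑' i, v i ^ 2 ≤ ∑' i, v i * ∑' j, v j :=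
        Summable.tsum_le_tsum hle ((hv.mul_right _).of_nonneg_of_le (fun i => sq_nonneg _) hle)
          (hv.mul_right _)
    _ = (∑' i, v i) ^ 2 := by rw [tsum_mul_right, sq]

theorem summable_shift_mul_geometric {α : ℕ → ℝ} (hα0 : ∀ j, 0 ≤ α j) (hα : Summable α)
    {s : ℝ} (hs0 : 0 ≤ s) (hs1 : s < 1) (k : ℕ) : Summable fun i => α (k + i) * s ^ i :=
  ((summable_geometric_of_lt_one hs0 hs1).mul_left (∑' j, α j)).of_nonneg_of_le
    (fun i => mul_nonneg (hα0 _) (pow_nonneg hs0 i))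
    fun i => mul_le_mul_of_nonneg_right (hα.le_tsum _ fun j _ => hα0 j) (pow_nonneg hs0 i)

theorem summable_tsum_shift_mul_geometric {α : ℕ → ℝ} (hα0 : ∀ j, 0 ≤ α j) (hα : Summable α)
    {s : ℝ} (hs0 : 0 ≤ s) (hs1 : s < 1) : Summable fun k => ∑' i, α (k + i) * s ^ i := by
  have hrow := summable_shift_mul_geometric hα0 hα hs0 hs1
  refine summable_of_sum_range_le (c := (∑' j, α j) * ∑' i, s ^ i)
    (fun k => tsum_nonneg fun i => mul_nonneg (hα0 _) (pow_nonneg hs0 i)) fun n => ?_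
  rw [← Summable.tsum_finsetSum fun k _ => hrow k, ← tsum_mul_left]
  refine Summable.tsum_le_tsum (fun i => ?_) (summable_sum fun k _ => hrow k)
    ((summable_geometric_of_lt_one hs0 hs1).mul_left _)
  rw [← Finset.sum_mul]
  refine mul_le_mul_of_nonneg_right ?_ (pow_nonneg hs0 i)
  calc ∑ k ∈ Finset.range n, α (k + i) = ∑ j ∈ (Finset.range n).map (addRightEmbedding i), α j :=
        by simp
    _ ≤ ∑' j, α j := hα.sum_le_tsum _ fun j _ => hα0 j

theorem summable_sqrt_tsum_sq_mul_geometric {α : ℕ → ℝ} (hα0 : ∀ j, 0 ≤ α j)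
    (hα : Summable α) {r : ℝ} (hr0 : 0 ≤ r) (hr1 : r < 1) :
    Summable fun k => √(∑' i, α (k + i) ^ 2 * r ^ i) := by
  have hs0 : 0 ≤ √r := Real.sqrt_nonneg r
  have hs1 : √r < 1 := (Real.sqrt_lt' one_pos).2 (by simpa using hr1)
  refine (summable_tsum_shift_mul_geometric hα0 hα hs0 hs1).of_nonneg_of_le
    (fun k => Real.sqrt_nonneg _) fun k => ?_
  have hv0 : ∀ i, 0 ≤ α (k + i) * √r ^ i := fun i => mul_nonneg (hα0 _) (pow_nonneg hs0 i)
  calc √(∑' i, α (k + i) ^ 2 * r ^ i) = √(∑' i, (α (k + i) * √r ^ i) ^ 2) := by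
        simp only [mul_pow, pow_right_comm _ _ 2, Real.sq_sqrt hr0]
    _ ≤ √((∑' i, α (k + i) * √r ^ i) ^ 2) :=
        Real.sqrt_le_sqrt (tsum_sq_le_sq_tsum hv0 (summable_shift_mul_geometric hα0 hα hs0 hs1 k))
    _ = ∑' i, α (k + i) * √r ^ i := Real.sqrt_sq (tsum_nonneg hv0)

theorem summable_sqrt_two_pow_mul_of_sub_succ_le {G α : ℕ → ℝ} {c : ℝ} (hc : 0 < c)
    (hα0 : ∀ j, 0 ≤ α j) (hα : Summable α) (hG : Tendsto G atTop (𝓝 0))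
    (h : ∀ j, G j - G (j + 1) ≤ α j ^ 2 / (c * 2 ^ j)) :
    Summable fun k => √(c * 2 ^ k * G k) := by
  refine (summable_sqrt_tsum_sq_mul_geometric hα0 hα (r := 1 / 2) (by norm_num)
    (by norm_num)).of_nonneg_of_le (fun k => Real.sqrt_nonneg _) fun k => Real.sqrt_le_sqrt ?_
  have hck : 0 < c * 2 ^ k := by positivity
  have hα2 : Summable fun j => α j ^ 2 :=
    (hα.mul_left (∑' j, α j)).of_nonneg_of_le (fun j => sq_nonneg _) fun j => by
      rw [sq]; exact mul_le_mul_of_nonneg_right (hα.le_tsum j fun i _ => hα0 i) (hα0 j)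
  have hrow := summable_shift_mul_geometric (fun j => sq_nonneg (α j)) hα2 (s := 1 / 2)
    (by norm_num) (by norm_num) k
  have hGk : Tendsto (fun i => G (k + i)) atTop (𝓝 0) :=
    hG.comp (tendsto_atTop_mono (fun i => Nat.le_add_left i k) tendsto_id)
  have := le_tsum_of_sub_succ_le hGk (hrow.div_const (c * 2 ^ k)) fun i =>
    calc G (k + i) - G (k + (i + 1)) = G (k + i) - G (k + i + 1) := by rw [add_assoc]
      _ ≤ α (k + i) ^ 2 / (c * 2 ^ (k + i)) := h (k + i)
      _ = α (k + i) ^ 2 * (1 / 2) ^ i / (c * 2 ^ k) := by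
        rw [pow_add, one_div, inv_pow]; field_simp
  rwa [tsum_div_const, le_div_iff₀ hck, add_zero, mul_comm] at this

theorem not_summable_inv_log_mul_two_pow {T : ℝ} (hT : 1 < T) :
    ¬ Summable fun k : ℕ => (Real.log (T * 2 ^ k))⁻¹ := by
  intro h
  apply Real.not_summable_natCast_inv
  rw [← summable_nat_add_iff 1]
  have hlogT := Real.log_pos hT
  have hlog2 := Real.log_pos one_lt_two
  refine (h.mul_left (Real.log (2 * T))).of_nonneg_of_le (fun k => by positivity) fun k => ?_
  have hlog : Real.log (T * 2 ^ k) = Real.log T + k * Real.log 2 := by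
    rw [Real.log_mul (by positivity) (by positivity), Real.log_pow]
  have hpos : 0 < Real.log (T * 2 ^ k) := by rw [hlog]; positivity
  rw [← div_eq_mul_inv, inv_eq_one_div, div_le_div_iff₀ (by positivity) hpos, hlog,
    Real.log_mul two_ne_zero (by positivity)]
  push_cast
  nlinarith [(Nat.cast_nonneg k : (0 : ℝ) ≤ k)]

theorem ConvexOn.le_of_deriv_pos {f : ℝ → ℝ} (hf : ConvexOn ℝ univ f) {y z : ℝ}
    (hz : DifferentiableAt ℝ f z) (hpos : 0 < deriv f z) (hyz : f y ≤ f z) : y ≤ z := by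
  have := hf.sub_le_deriv_mul_sub hz y
  nlinarith

namespace IsGradientFlow

variable {f x : ℝ → ℝ}

theorem continuousOn (hx : IsGradientFlow f x) : ContinuousOn x (Ici 0) :=
  fun t ht => (hx t ht).continuousWithinAt

theorem hasDerivAt (hx : IsGradientFlow f x) {t : ℝ} (ht : 0 < t) :
    HasDerivAt x (-deriv f (x t)) t :=
  (hx t ht.le).hasDerivAt (Ici_mem_nhds ht)

theorem antitoneOn_comp (hx : IsGradientFlow f x) (hd : Differentiable ℝ f) :
    AntitoneOn (f ∘ x) (Ici 0) := by
  have hderiv : ∀ t ∈ interior (Ici (0 : ℝ)),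
      HasDerivAt (f ∘ x) (deriv f (x t) * -deriv f (x t)) t := fun t ht =>
    (hd (x t)).hasDerivAt.comp t (hx.hasDerivAt (by simpa using ht))
  refine antitoneOn_of_deriv_nonpos (convex_Ici 0)
    (hd.continuous.comp_continuousOn hx.continuousOn)
    (fun t ht => (hderiv t ht).differentiableAt.differentiableWithinAt) fun t ht => ?_
  rw [(hderiv t ht).deriv, mul_neg]
  exact neg_nonpos.2 (mul_self_nonneg _)

theorem mul_sub_le_sub (hx : IsGradientFlow f x) {s t c : ℝ} (hs : 0 ≤ s) (hst : s ≤ t)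
    (h : ∀ u ∈ Ioo s t, c ≤ deriv f (x u)) : c * (t - s) ≤ x s - x t := by
  have hderiv : ∀ u ∈ interior (Icc s t), HasDerivAt x (-deriv f (x u)) u := fun u hu =>
    hx.hasDerivAt (hs.trans_lt (interior_Icc.subset hu).1)
  have := (convex_Icc s t).image_sub_le_mul_sub_of_deriv_le
    (hx.continuousOn.mono fun u hu => hs.trans hu.1)
    (fun u hu => (hderiv u hu).differentiableAt.differentiableWithinAt)
    (fun u hu => by rw [(hderiv u hu).deriv]; exact neg_le_neg (h u (interior_Icc.subset hu)))
    s (left_mem_Icc.2 hst) t (right_mem_Icc.2 hst) hst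
  linarith

theorem sub_le_mul_sub (hx : IsGradientFlow f x) {s t c : ℝ} (hs : 0 ≤ s) (hst : s ≤ t)
    (h : ∀ u ∈ Ioo s t, deriv f (x u) ≤ c) : x s - x t ≤ c * (t - s) := by
  have hderiv : ∀ u ∈ interior (Icc s t), HasDerivAt x (-deriv f (x u)) u := fun u hu =>
    hx.hasDerivAt (hs.trans_lt (interior_Icc.subset hu).1)
  have := (convex_Icc s t).mul_sub_le_image_sub_of_le_deriv
    (hx.continuousOn.mono fun u hu => hs.trans hu.1)
    (fun u hu => (hderiv u hu).differentiableAt.differentiableWithinAt)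
    (fun u hu => by rw [(hderiv u hu).deriv]; exact neg_le_neg (h u (interior_Icc.subset hu)))
    s (left_mem_Icc.2 hst) t (right_mem_Icc.2 hst) hst
  linarith

theorem antitoneOn (hx : IsGradientFlow f x) (hp : ∀ t ∈ Ici (0 : ℝ), 0 ≤ deriv f (x t)) :
    AntitoneOn x (Ici 0) := fun _ hs _ _ hst => by
  have := hx.mul_sub_le_sub hs hst (c := 0) fun u hu => hp u (hs.trans hu.1.le)
  linarith

theorem antitoneOn_deriv_comp (hx : IsGradientFlow f x) (hconv : ConvexOn ℝ univ f)
    (hd : Differentiable ℝ f) (hp : ∀ t ∈ Ici (0 : ℝ), 0 ≤ deriv f (x t)) :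
    AntitoneOn (fun t => deriv f (x t)) (Ici 0) := fun _ hs _ ht hst =>
  hconv.monotoneOn_deriv (fun y _ => hd y) (mem_univ _) (mem_univ _) (hx.antitoneOn hp hs ht hst)

theorem deriv_mul_sub_le_sub (hx : IsGradientFlow f x)
    (hanti : AntitoneOn (fun t => deriv f (x t)) (Ici 0)) {s t : ℝ} (hs : 0 ≤ s) (hst : s ≤ t) :
    deriv f (x t) * (t - s) ≤ x s - x t :=
  hx.mul_sub_le_sub hs hst fun _ hu => hanti (hs.trans hu.1.le) (hs.trans hst) hu.2.le

theorem sub_le_deriv_mul_sub (hx : IsGradientFlow f x)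
    (hanti : AntitoneOn (fun t => deriv f (x t)) (Ici 0)) {s t : ℝ} (hs : 0 ≤ s) (hst : s ≤ t) :
    x s - x t ≤ deriv f (x s) * (t - s) :=
  hx.sub_le_mul_sub hs hst fun _ hu => hanti hs (hs.trans hu.1.le) hu.1.le

theorem summable_mul_deriv_dyadic (hx : IsGradientFlow f x)
    (hanti : AntitoneOn (fun t => deriv f (x t)) (Ici 0))
    (hp : ∀ t ∈ Ici (0 : ℝ), 0 ≤ deriv f (x t)) {b : ℝ} (hb : ∀ t ∈ Ici (0 : ℝ), b ≤ x t)
    {T : ℝ} (hT : 0 ≤ T) : Summable fun j : ℕ => T * 2 ^ j * deriv f (x (T * 2 ^ j)) := by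
  rw [← summable_nat_add_iff 1]
  refine summable_of_sum_range_le (c := 2 * (x T - b))
    (fun j => mul_nonneg (by positivity) (hp _ (mem_Ici.2 (by positivity)))) fun n => ?_
  have hstep : ∀ j : ℕ, T * 2 ^ (j + 1) * deriv f (x (T * 2 ^ (j + 1)))
      ≤ 2 * (x (T * 2 ^ j) - x (T * 2 ^ (j + 1))) := fun j => by
    have := hx.deriv_mul_sub_le_sub hanti (by positivity : 0 ≤ T * 2 ^ j)
      (t := T * 2 ^ (j + 1)) (by gcongr <;> norm_num)
    rw [pow_succ] at this ⊢
    linarith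
  calc ∑ j ∈ Finset.range n, T * 2 ^ (j + 1) * deriv f (x (T * 2 ^ (j + 1)))
      ≤ ∑ j ∈ Finset.range n, 2 * (x (T * 2 ^ j) - x (T * 2 ^ (j + 1))) :=
        Finset.sum_le_sum fun j _ => hstep j
    _ = 2 * (x T - x (T * 2 ^ n)) := by
        rw [← Finset.mul_sum, Finset.sum_range_sub' fun j => x (T * 2 ^ j), pow_zero, mul_one]
    _ ≤ 2 * (x T - b) := by linarith [hb _ (by positivity : 0 ≤ T * 2 ^ n)]

theorem summable_sqrt_dyadic (hx : IsGradientFlow f x) (hconv : ConvexOn ℝ univ f)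
    (hd : Differentiable ℝ f) {xstar : ℝ} (hmin : ∀ y, f xstar ≤ f y)
    (hp : ∀ t ∈ Ici (0 : ℝ), 0 < deriv f (x t)) {T : ℝ} (hT : 0 < T) :
    Summable fun k : ℕ => √(T * 2 ^ k * (f (x (T * 2 ^ k)) - f xstar)) := by
  have hp0 : ∀ t ∈ Ici (0 : ℝ), 0 ≤ deriv f (x t) := fun t ht => (hp t ht).le
  have hanti := hx.antitoneOn_deriv_comp hconv hd hp0
  have hxstar : ∀ t ∈ Ici (0 : ℝ), xstar ≤ x t := fun t ht =>
    hconv.le_of_deriv_pos (hd _) (hp t ht) (hmin _)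
  have hτ : ∀ j : ℕ, 0 ≤ T * 2 ^ j := fun j => by positivity
  have hα := hx.summable_mul_deriv_dyadic hanti hp0 hxstar hT.le
  refine summable_sqrt_two_pow_mul_of_sub_succ_le (G := fun j => f (x (T * 2 ^ j)) - f xstar) hT
    (fun j => mul_nonneg (hτ j) (hp0 _ (hτ j))) hα ?_ fun j => ?_
  · refine squeeze_zero (fun j => sub_nonneg.2 (hmin _)) (fun j => ?_)
      (by simpa using hα.tendsto_atTop_zero.const_mul ((x 0 - xstar) / T))
    have hD := mul_nonneg (hp0 _ (hτ j)) (sub_nonneg.2 (hxstar 0 self_mem_Ici))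
    calc f (x (T * 2 ^ j)) - f xstar
        ≤ deriv f (x (T * 2 ^ j)) * (x (T * 2 ^ j) - xstar) :=
          hconv.sub_le_deriv_mul_sub (hd _) xstar
      _ ≤ deriv f (x (T * 2 ^ j)) * (x 0 - xstar) :=
          mul_le_mul_of_nonneg_left
            (sub_le_sub_right (hx.antitoneOn hp0 self_mem_Ici (hτ j) (hτ j)) _) (hp0 _ (hτ j))
      _ ≤ (x 0 - xstar) / T * (T * 2 ^ j * deriv f (x (T * 2 ^ j))) := by
          rw [div_mul_eq_mul_div, le_div_iff₀ hT]
          nlinarith [mul_nonneg hD hT.le, one_le_pow₀ (one_le_two : (1 : ℝ) ≤ 2) (n := j)]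
  · have hj : T * 2 ^ j ≤ T * 2 ^ (j + 1) := by gcongr <;> norm_num
    have hlen : T * 2 ^ (j + 1) - T * 2 ^ j = T * 2 ^ j := by ring
    calc _ = f (x (T * 2 ^ j)) - f (x (T * 2 ^ (j + 1))) := by ring
      _ ≤ deriv f (x (T * 2 ^ j)) * (x (T * 2 ^ j) - x (T * 2 ^ (j + 1))) :=
          hconv.sub_le_deriv_mul_sub (hd _) _
      _ ≤ deriv f (x (T * 2 ^ j)) * (deriv f (x (T * 2 ^ j)) * (T * 2 ^ (j + 1) - T * 2 ^ j)) :=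
          mul_le_mul_of_nonneg_left (hx.sub_le_deriv_mul_sub hanti (hτ j) hj) (hp0 _ (hτ j))
      _ = (T * 2 ^ j * deriv f (x (T * 2 ^ j))) ^ 2 / (T * 2 ^ j) := by rw [hlen]; field_simp

theorem not_forall_lower_bound_of_deriv_pos (hx : IsGradientFlow f x)
    (hconv : ConvexOn ℝ univ f) (hd : Differentiable ℝ f) {xstar : ℝ} (hmin : ∀ y, f xstar ≤ f y)
    (hp : ∀ t ∈ Ici (0 : ℝ), 0 < deriv f (x t)) {ε T : ℝ} (hε : 0 < ε) (hT : 1 < T) :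
    ¬ ∀ t ≥ T, ε / (t * Real.log t ^ 2) ≤ f (x t) - f xstar := by
  intro hbd
  have hτ : ∀ k : ℕ, 1 < T * 2 ^ k := fun k => one_lt_mul_of_lt_of_le hT (one_le_pow₀ one_le_two)
  apply not_summable_inv_log_mul_two_pow hT
  rw [← summable_mul_left_iff (Real.sqrt_pos.2 hε).ne']
  refine (hx.summable_sqrt_dyadic hconv hd hmin hp (by linarith)).of_nonneg_of_le
    (fun k => ?_) fun k => Real.le_sqrt_of_sq_le ?_
  · have := Real.log_pos (hτ k)
    positivity
  · have hL := Real.log_pos (hτ k)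
    calc (√ε * (Real.log (T * 2 ^ k))⁻¹) ^ 2
        = T * 2 ^ k * (ε / (T * 2 ^ k * Real.log (T * 2 ^ k) ^ 2)) := by
          rw [mul_pow, Real.sq_sqrt hε.le]
          field_simp
      _ ≤ T * 2 ^ k * (f (x (T * 2 ^ k)) - f xstar) :=
          mul_le_mul_of_nonneg_left
            (hbd _ (le_mul_of_one_le_right (by linarith) (one_le_pow₀ one_le_two)))
            (by linarith [hτ k])

theorem deriv_ne_zero (hx : IsGradientFlow f x) (hconv : ConvexOn ℝ univ f)
    (hd : Differentiable ℝ f) {xstar T : ℝ} (hgap : ∀ t ≥ T, f xstar < f (x t)) :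
    ∀ t ∈ Ici (0 : ℝ), deriv f (x t) ≠ 0 := by
  intro t₀ ht₀ h0
  have hmin : f (x t₀) ≤ f xstar := by
    simpa [h0] using hconv.sub_le_deriv_mul_sub (hd (x t₀)) xstar
  have hdecr : f (x (max T t₀)) ≤ f (x t₀) :=
    hx.antitoneOn_comp hd ht₀ (ht₀.trans (le_max_right T t₀)) (le_max_right T t₀)
  linarith [hgap _ (le_max_left T t₀)]

theorem comp_neg (hx : IsGradientFlow f x) : IsGradientFlow (fun y => f (-y)) (fun t => -x t) :=
  fun t ht => by simpa [deriv_comp_neg] using (hx t ht).fun_neg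

end IsGradientFlow

/-- For a convex C² function `f : ℝ → ℝ` attaining its infimum at `x*`
and a gradient flow `x` of `f`, one has
`liminf_{t→∞} t·(log t)²·(f(x(t)) − inf f) = 0`; equivalently, there are no `ε > 0`
and `T > 1` with `f(x(t)) − inf f ≥ ε/(t·(log t)²)` for all `t ≥ T`. -/
theorem gradient_flow_one_dim_log_square_liminf
    (f : ℝ → ℝ) (hconv : ConvexOn ℝ Set.univ f) (hf : ContDiff ℝ 2 f)
    (xstar : ℝ) (hmin : ∀ y, f xstar ≤ f y)
    (x : ℝ → ℝ)
    (hx : ∀ t ∈ Set.Ici (0:ℝ), HasDerivWithinAt x (-(deriv f (x t))) (Set.Ici 0) t) :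
    ¬ ∃ ε > (0:ℝ), ∃ T > (1:ℝ), ∀ t ≥ T,
        ε / (t * (Real.log t) ^ 2) ≤ f (x t) - f xstar := by
  rintro ⟨ε, hε, T, hT, hbd⟩
  have hflow : IsGradientFlow f x := hx
  have hd : Differentiable ℝ f := hf.differentiable two_ne_zero
  have hgap : ∀ t ≥ T, f xstar < f (x t) := fun t ht => by
    have := Real.log_pos (hT.trans_le ht)
    have : 0 < t := by linarith
    have : 0 < ε / (t * Real.log t ^ 2) := by positivity
    linarith [hbd t ht]
  rcases isPreconnected_Ici.pos_or_neg_of_ne_zero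
      ((hf.continuous_deriv one_le_two).comp_continuousOn hflow.continuousOn)
      (hflow.deriv_ne_zero hconv hd hgap) with hpos | hneg
  · exact hflow.not_forall_lower_bound_of_deriv_pos hconv hd hmin hpos hε hT hbd
  · refine hflow.comp_neg.not_forall_lower_bound_of_deriv_pos
      (hconv.comp_linearMap (-LinearMap.id)) (hd.comp differentiable_neg)
      (xstar := -xstar) (fun y => by simpa using hmin (-y))
      (fun t ht => by simpa [deriv_comp_neg] using hneg t ht) hε hT fun t ht => by
        simpa using hbd t ht
end

section
/- Let φ : (0,∞) → (0,∞) be a monotone increasing function with lim_{t→∞} φ(t) = +∞. Then there exists a convex differentiable function g : (0,∞) → (0,∞) such that lim_{t→∞} g(t) = 0, ∫₀^∞ √(−g'(t)) dt < ∞, and limsup_{t→∞} t·φ(t)·g(t) = +∞. -/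
/-!
Take `g t = ∑ aₙ exp (-t / bₙ)`, a mixture of decaying exponentials, with `bₙ ≥ 1`. Since
`√(∑ xₙ) ≤ ∑ √xₙ`, the `n`-th term contributes at most `∫₀^∞ √(aₙ/bₙ) exp (-t/(2bₙ)) dt = 2√(aₙbₙ)`
to `∫ √(-g')`, while `g bₙ ≥ aₙ / e`. Choosing `bₙ` so large that `φ bₙ ≥ n 4ⁿ` and then
`aₙ = 1 / (4ⁿ bₙ)` makes `∑ aₙ` and `∑ √(aₙbₙ) = ∑ 2⁻ⁿ` finite, while `bₙ φ(bₙ) g(bₙ) ≥ n / e`.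
-/

open Filter MeasureTheory Set Real

theorem Real.sqrt_tsum_le_tsum_sqrt {ι : Type*} {d : ι → ℝ} (hd : ∀ i, 0 ≤ d i)
    (hsd : Summable fun i => √(d i)) : √(∑' i, d i) ≤ ∑' i, √(d i) := by
  set S := ∑' i, √(d i)
  have hdS : ∀ i, d i ≤ √(d i) * S := fun i =>
    calc d i = √(d i) * √(d i) := (mul_self_sqrt (hd i)).symm
      _ ≤ √(d i) * S := by
        gcongr
        exact hsd.le_tsum i fun j _ => sqrt_nonneg _
  have hsumd : Summable d := .of_nonneg_of_le hd hdS (hsd.mul_right S)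
  rw [sqrt_le_left (tsum_nonneg fun i => sqrt_nonneg _), sq, ← tsum_mul_right]
  exact hsumd.tsum_le_tsum hdS (hsd.mul_right S)

theorem ConvexOn.tsum {ι E : Type*} [AddCommMonoid E] [Module ℝ E] {s : Set E}
    {f : ι → E → ℝ} (hs : Convex ℝ s) (hf : ∀ i, ConvexOn ℝ s (f i))
    (hsum : ∀ x ∈ s, Summable fun i => f i x) : ConvexOn ℝ s fun x => ∑' i, f i x := by
  refine ⟨hs, fun x hx y hy p q hp hq hpq => ?_⟩
  have hx' := (hsum x hx).mul_left p
  have hy' := (hsum y hy).mul_left q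
  simp only [smul_eq_mul] at *
  rw [← tsum_mul_left, ← tsum_mul_left, ← hx'.tsum_add hy']
  exact (hsum _ (hs hx hy hp hq hpq)).tsum_le_tsum (fun i => (hf i).2 hx hy hp hq hpq)
    (hx'.add hy')

theorem MeasureTheory.integrable_tsum_of_summable_integral_norm {α ι : Type*} [Countable ι]
    [MeasurableSpace α] {μ : Measure α} {F : ι → α → ℝ} (hF : ∀ i, Integrable (F i) μ)
    (hsum : Summable fun i => ∫ a, ‖F i a‖ ∂μ) : Integrable (fun a => ∑' i, F i a) μ := by
  refine ⟨(AEMeasurable.tsum fun i => (hF i).aemeasurable).aestronglyMeasurable, ?_⟩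
  calc ∫⁻ a, ‖∑' i, F i a‖ₑ ∂μ ≤ ∫⁻ a, ∑' i, ‖F i a‖ₑ ∂μ :=
        lintegral_mono fun _ => enorm_tsum_le_tsum_enorm
    _ = ∑' i, ENNReal.ofReal (∫ a, ‖F i a‖ ∂μ) := by
        rw [lintegral_tsum fun i => (hF i).aemeasurable.enorm]
        simp_rw [ofReal_integral_norm_eq_lintegral_enorm (hF _)]
    _ = ENNReal.ofReal (∑' i, ∫ a, ‖F i a‖ ∂μ) :=
        (ENNReal.ofReal_tsum_of_nonneg (fun i => integral_nonneg fun _ => norm_nonneg _) hsum).symm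
    _ < ⊤ := ENNReal.ofReal_lt_top

noncomputable def expMixture (a b : ℕ → ℝ) (t : ℝ) : ℝ := ∑' n, a n * exp (-t / b n)

theorem Real.exp_neg_div_le_one {t c : ℝ} (ht : 0 ≤ t) (hc : 0 ≤ c) : exp (-t / c) ≤ 1 :=
  exp_le_one_iff.2 (div_nonpos_of_nonpos_of_nonneg (neg_nonpos.2 ht) hc)

theorem integral_sqrt_mul_exp_neg_div_two {c β : ℝ} (hc : 0 ≤ c) (hβ : 0 < β) :
    ∫ t in Ioi 0, √(c / β) * exp (-t / β / 2) = 2 * √(c * β) := by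
  have hexp : ∫ t in Ioi (0:ℝ), exp (-t / β / 2) = 2 * β := by
    have h := integral_exp_mul_Ioi (neg_lt_zero.2 (inv_pos.2 (mul_pos two_pos hβ))) 0
    simp only [mul_zero, exp_zero] at h
    rw [show (fun t => exp (-t / β / 2)) = fun t => exp (-(2 * β)⁻¹ * t) by
      ext t; ring_nf, h]
    field_simp
  rw [integral_const_mul, hexp, ← sqrt_sq (mul_pos two_pos hβ).le, ← sqrt_mul (div_nonneg hc hβ.le),
    show c / β * (2 * β) ^ 2 = 2 ^ 2 * (c * β) by field_simp, sqrt_mul (by positivity),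
    sqrt_sq two_pos.le]

section expMixture

variable {a b : ℕ → ℝ}

theorem summable_expMixture (ha : ∀ n, 0 ≤ a n) (hb : ∀ n, 0 ≤ b n) (has : Summable a)
    {t : ℝ} (ht : 0 ≤ t) : Summable fun n => a n * exp (-t / b n) :=
  has.of_nonneg_of_le (fun n => mul_nonneg (ha n) (exp_pos _).le) fun n =>
    mul_le_of_le_one_right (ha n) (exp_neg_div_le_one ht (hb n))

theorem le_expMixture (ha : ∀ n, 0 ≤ a n) (hb : ∀ n, 0 ≤ b n) (has : Summable a) (n : ℕ)
    {t : ℝ} (ht : 0 ≤ t) : a n * exp (-t / b n) ≤ expMixture a b t :=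
  (summable_expMixture ha hb has ht).le_tsum n fun m _ => mul_nonneg (ha m) (exp_pos _).le

theorem convexOn_expMixture (ha : ∀ n, 0 ≤ a n) (hb : ∀ n, 0 ≤ b n) (has : Summable a) :
    ConvexOn ℝ (Ici 0) (expMixture a b) := by
  refine ConvexOn.tsum (convex_Ici 0) (fun n => ?_) fun t ht => summable_expMixture ha hb has ht
  have h := (convexOn_exp.comp_linearMap (-(b n)⁻¹ • LinearMap.id)).smul (ha n)
  refine (h.subset (subset_univ _) (convex_Ici 0)).congr fun t _ => ?_
  simp [div_eq_inv_mul]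

theorem tendsto_expMixture_atTop (ha : ∀ n, 0 ≤ a n) (hb : ∀ n, 0 < b n) (has : Summable a) :
    Tendsto (expMixture a b) atTop (nhds 0) := by
  unfold expMixture
  have hterm (n : ℕ) : Tendsto (fun t => a n * exp (-t / b n)) atTop (nhds 0) := by
    have := (tendsto_exp_atBot.comp
      (tendsto_neg_atTop_atBot.atBot_div_const (hb n))).const_mul (a n)
    simpa [Function.comp_def] using this
  have hbound : ∀ᶠ t in atTop, ∀ n, ‖a n * exp (-t / b n)‖ ≤ a n := by
    filter_upwards [eventually_ge_atTop 0] with t ht n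
    rw [norm_of_nonneg (mul_nonneg (ha n) (exp_pos _).le)]
    exact mul_le_of_le_one_right (ha n) (exp_neg_div_le_one ht (hb n).le)
  simpa using tendsto_tsum_of_dominated_convergence has hterm hbound

theorem hasDerivAt_expMixture (ha : ∀ n, 0 ≤ a n) (hb : ∀ n, 1 ≤ b n) (has : Summable a)
    {t : ℝ} (ht : 0 < t) :
    HasDerivAt (expMixture a b) (-∑' n, a n / b n * exp (-t / b n)) t := by
  have hb0 (n : ℕ) : 0 < b n := one_pos.trans_le (hb n)
  have hterm (n : ℕ) (s : ℝ) :
      HasDerivAt (fun s => a n * exp (-s / b n)) (-(a n / b n * exp (-s / b n))) s :=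
    (((hasDerivAt_neg s).div_const (b n)).exp.const_mul (a n)).congr_deriv (by ring)
  have hbound (n : ℕ) (s : ℝ) (hs : s ∈ Ioi 0) : ‖-(a n / b n * exp (-s / b n))‖ ≤ a n := by
    rw [norm_neg, norm_of_nonneg (by have := ha n; have := hb0 n; positivity)]
    simpa using mul_le_mul (div_le_self (ha n) (hb n))
      (exp_neg_div_le_one (le_of_lt hs) (hb0 n).le) (exp_pos _).le (ha n)
  rw [← tsum_neg]
  exact hasDerivAt_tsum_of_isPreconnected has isOpen_Ioi isPreconnected_Ioi
    (fun n s _ => hterm n s) hbound (mem_Ioi.2 one_pos)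
    (summable_expMixture ha (fun n => (hb0 n).le) has zero_le_one) ht

theorem integrableOn_sqrt_neg_deriv_expMixture (ha : ∀ n, 0 ≤ a n) (hb : ∀ n, 1 ≤ b n)
    (has : Summable a) (hab : Summable fun n => √(a n * b n)) :
    IntegrableOn (fun t => √(-deriv (expMixture a b) t)) (Ioi 0) := by
  have hb0 (n : ℕ) : 0 < b n := one_pos.trans_le (hb n)
  set w : ℕ → ℝ → ℝ := fun n t => √(a n / b n) * exp (-t / b n / 2)
  have hw_int (n : ℕ) : IntegrableOn (w n) (Ioi 0) := by
    have := (exp_neg_integrableOn_Ioi 0 (inv_pos.2 (mul_pos two_pos (hb0 n)))).const_mul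
      √(a n / b n)
    refine IntegrableOn.congr_fun this (fun t _ => ?_) measurableSet_Ioi
    simp only [w]
    ring_nf
  have hw_sum : IntegrableOn (fun t => ∑' n, w n t) (Ioi 0) := by
    refine integrable_tsum_of_summable_integral_norm hw_int ?_
    have (n : ℕ) : ∫ t in Ioi 0, ‖w n t‖ = 2 * √(a n * b n) := by
      simp only [w, norm_mul, norm_of_nonneg (sqrt_nonneg _), norm_of_nonneg (exp_pos _).le]
      exact integral_sqrt_mul_exp_neg_div_two (ha n) (hb0 n)
    simpa only [this] using hab.mul_left 2
  refine hw_sum.mono' (measurable_deriv _).neg.sqrt.aestronglyMeasurable ?_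
  filter_upwards [ae_restrict_mem measurableSet_Ioi] with t ht
  have hterm (n : ℕ) : √(a n / b n * exp (-t / b n)) = w n t := by
    rw [sqrt_mul (div_nonneg (ha n) (hb0 n).le), ← exp_half]
  have hw_summable : Summable fun n => w n t := by
    refine hab.of_nonneg_of_le (fun n => by positivity) fun n => ?_
    calc w n t ≤ √(a n / b n) := mul_le_of_le_one_right (sqrt_nonneg _) <| by
          rw [div_div]; exact exp_neg_div_le_one (le_of_lt ht) (mul_pos (hb0 n) two_pos).le
      _ ≤ √(a n * b n) := sqrt_le_sqrt <|
          (div_le_self (ha n) (hb n)).trans (le_mul_of_one_le_right (ha n) (hb n))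
  rw [norm_of_nonneg (sqrt_nonneg _), (hasDerivAt_expMixture ha hb has ht).deriv, neg_neg]
  calc √(∑' n, a n / b n * exp (-t / b n)) ≤ ∑' n, √(a n / b n * exp (-t / b n)) :=
        sqrt_tsum_le_tsum_sqrt (fun n => mul_nonneg (div_nonneg (ha n) (hb0 n).le) (exp_pos _).le)
          (by simpa only [hterm] using hw_summable)
    _ = ∑' n, w n t := by simp only [hterm]

end expMixture

theorem exists_weights_scales_of_tendsto_atTop {φ : ℝ → ℝ} (hφ : Tendsto φ atTop atTop) :
    ∃ a b : ℕ → ℝ, (∀ n, 0 < a n) ∧ (∀ n, 1 ≤ b n) ∧ Tendsto b atTop atTop ∧ Summable a ∧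
      (Summable fun n => √(a n * b n)) ∧ ∀ n : ℕ, (n : ℝ) ≤ b n * φ (b n) * a n := by
  choose b hb_ge hφb using fun n : ℕ =>
    ((eventually_ge_atTop ((n : ℝ) + 1)).and (hφ.eventually_ge_atTop (n * 4 ^ n))).exists
  have hb1 (n : ℕ) : 1 ≤ b n := (le_add_of_nonneg_left n.cast_nonneg).trans (hb_ge n)
  have hb0 (n : ℕ) : 0 < b n := one_pos.trans_le (hb1 n)
  set a : ℕ → ℝ := fun n => 1 / (4 ^ n * b n)
  have ha0 (n : ℕ) : 0 < a n := by have := hb0 n; positivity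
  have hab (n : ℕ) : a n * b n * 4 ^ n = 1 := by
    simp only [a]
    field_simp [(hb0 n).ne']
  refine ⟨a, b, ha0, hb1, ?_, ?_, ?_, fun n => ?_⟩
  · exact tendsto_atTop_mono (fun n => (le_add_of_nonneg_right zero_le_one).trans (hb_ge n))
      tendsto_natCast_atTop_atTop
  · refine (summable_geometric_of_lt_one (by norm_num) (by norm_num : (1 / 4 : ℝ) < 1))
      |>.of_nonneg_of_le (fun n => (ha0 n).le) fun n => ?_
    rw [div_pow, one_pow]
    exact one_div_le_one_div_of_le (by positivity) (le_mul_of_one_le_right (by positivity) (hb1 n))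
  · have (n : ℕ) : √(a n * b n) = (1 / 2) ^ n := by
      have h4 : ((1 / 2 : ℝ) ^ n) ^ 2 * 4 ^ n = 1 := by
        rw [← pow_mul, mul_comm n 2, pow_mul, ← mul_pow]
        norm_num
      rw [mul_right_cancel₀ (by positivity) ((hab n).trans h4.symm), sqrt_sq (by positivity)]
    simpa only [this] using summable_geometric_two
  · calc (n : ℝ) = n * 4 ^ n * (a n * b n) := by linear_combination (-(n : ℝ)) * hab n
      _ ≤ φ (b n) * (a n * b n) :=
          mul_le_mul_of_nonneg_right (hφb n) (mul_pos (ha0 n) (hb0 n)).le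
      _ = b n * φ (b n) * a n := by ring

theorem no_quantitative_improvement_finite_length_general
    (φ : ℝ → ℝ)
    (hlim : Filter.Tendsto φ Filter.atTop Filter.atTop) :
    ∃ g : ℝ → ℝ, (∀ t ∈ Set.Ioi (0:ℝ), 0 < g t) ∧
      ConvexOn ℝ (Set.Ioi 0) g ∧
      DifferentiableOn ℝ g (Set.Ioi 0) ∧
      Filter.Tendsto g Filter.atTop (nhds 0) ∧
      MeasureTheory.IntegrableOn (fun t => Real.sqrt (-(deriv g t))) (Set.Ioi 0) ∧
      ∀ M : ℝ, ∃ᶠ t in Filter.atTop, M ≤ t * φ t * g t := by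
  obtain ⟨a, b, ha0, hb1, hb_tendsto, has, hab, hφ⟩ := exists_weights_scales_of_tendsto_atTop hlim
  have ha (n : ℕ) : 0 ≤ a n := (ha0 n).le
  have hb0 (n : ℕ) : 0 < b n := one_pos.trans_le (hb1 n)
  have hb (n : ℕ) : 0 ≤ b n := (hb0 n).le
  refine ⟨expMixture a b, fun t ht => ?_,
    (convexOn_expMixture ha hb has).subset Ioi_subset_Ici_self (convex_Ioi 0),
    fun t ht => (hasDerivAt_expMixture ha hb1 has ht).differentiableAt.differentiableWithinAt,
    tendsto_expMixture_atTop ha hb0 has, integrableOn_sqrt_neg_deriv_expMixture ha hb1 has hab,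
    fun M => hb_tendsto.frequently (Eventually.frequently ?_)⟩
  · exact (mul_pos (ha0 0) (exp_pos _)).trans_le (le_expMixture ha hb has 0 (le_of_lt ht))
  filter_upwards
    [(tendsto_natCast_atTop_atTop.atTop_mul_const (exp_pos (-1))).eventually_ge_atTop M] with n hn
  have hbφ : 0 ≤ b n * φ (b n) :=
    (mul_nonneg_iff_of_pos_right (ha0 n)).1 (n.cast_nonneg.trans (hφ n))
  calc M ≤ n * exp (-1) := hn
    _ ≤ b n * φ (b n) * (a n * exp (-b n / b n)) := by
        rw [neg_div, div_self (hb0 n).ne', ← mul_assoc]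
        exact mul_le_mul_of_nonneg_right (hφ n) (exp_pos _).le
    _ ≤ b n * φ (b n) * expMixture a b (b n) :=
        mul_le_mul_of_nonneg_left (le_expMixture ha hb has n (hb n)) hbφ

/-- For any monotone increasing `φ : (0,∞) → (0,∞)` with `φ(t) → ∞`
there exists a convex differentiable `g : (0,∞) → (0,∞)` with `g(t) → 0`,
`∫₀^∞ √(−g'(t)) dt < ∞`, and `limsup_{t→∞} t·φ(t)·g(t) = +∞` (i.e. for every `M`,
frequently `t·φ(t)·g(t) ≥ M`). -/
theorem no_quantitative_improvement_finite_length
    (φ : ℝ → ℝ) (hmono : MonotoneOn φ (Set.Ioi 0))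
    (hpos : ∀ t ∈ Set.Ioi (0:ℝ), 0 < φ t)
    (hlim : Filter.Tendsto φ Filter.atTop Filter.atTop) :
    ∃ g : ℝ → ℝ, (∀ t ∈ Set.Ioi (0:ℝ), 0 < g t) ∧
      ConvexOn ℝ (Set.Ioi 0) g ∧
      DifferentiableOn ℝ g (Set.Ioi 0) ∧
      Filter.Tendsto g Filter.atTop (nhds 0) ∧
      MeasureTheory.IntegrableOn (fun t => Real.sqrt (-(deriv g t))) (Set.Ioi 0) ∧
      ∀ M : ℝ, ∃ᶠ t in Filter.atTop, M ≤ t * φ t * g t :=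
  no_quantitative_improvement_finite_length_general φ hlim
end

section
/- Let f : ℝ^d → ℝ be a convex differentiable function whose gradient ∇f is L-Lipschitz continuous (L > 0) with respect to the Euclidean norm, let x* ∈ ℝ^d satisfy f(x*) = inf_{y ∈ ℝ^d} f(y), and let (x_n)_{n≥0} be defined by the gradient descent iteration x_{n+1} = x_n − η·∇f(x_n) with step size 0 < η < 2/L. Then η·Σ_{n=0}^∞ (f(x_n) − f(x*)) ≤ ‖x_0 − x*‖²/2 + (η/(2·(1 − Lη/2)))·(f(x_0) − f(x*)). -/
/-!
Two inequalities drive the estimate. The descent lemma gives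
`f x_{n+1} ≤ f x_n - η (1 - Lη/2) ‖∇f x_n‖²`, so `η (1 - Lη/2) Σ ‖∇f x_n‖² ≤ f x_0 - f x*`.
Expanding `‖x_{n+1} - x*‖²` and using the gradient inequality of convexity gives
`2η (f x_n - f x*) ≤ ‖x_n - x*‖² - ‖x_{n+1} - x*‖² + η² ‖∇f x_n‖²`, which telescopes;
the gradient sum is then bounded by the first inequality.
-/

open Set AffineMap InnerProductSpace RealInnerProductSpace
open scoped Gradient NNReal

variable {E : Type*} [NormedAddCommGroup E] [InnerProductSpace ℝ E] [CompleteSpace E]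
  {f : E → ℝ}

theorem HasGradientAt.hasDerivAt_comp_lineMap {g x y : E} {t : ℝ}
    (hf : HasGradientAt f g (lineMap x y t)) :
    HasDerivAt (f ∘ lineMap x y) ⟪g, y - x⟫_ℝ t := by
  simpa [toDual_apply_apply] using hf.hasFDerivAt.comp_hasDerivAt t hasDerivAt_lineMap

theorem ConvexOn.inner_gradient_le_sub (hconv : ConvexOn ℝ univ f) {g x : E}
    (hf : HasGradientAt f g x) (y : E) : ⟪g, y - x⟫_ℝ ≤ f y - f x := by
  have hderiv : HasDerivAt (f ∘ lineMap x y) ⟪g, y - x⟫_ℝ (0 : ℝ) :=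
    HasGradientAt.hasDerivAt_comp_lineMap (by rwa [lineMap_apply_zero])
  simpa [slope_def_field] using
    (hconv.comp_affineMap (lineMap x y : ℝ →ᵃ[ℝ] E)).le_slope_of_hasDerivAt
      (mem_univ 0) (mem_univ 1) one_pos hderiv

theorem Differentiable.le_add_inner_gradient_add_sq_norm (hf : Differentiable ℝ f) {K : ℝ≥0}
    (hlip : LipschitzWith K (∇ f)) (x y : E) :
    f y ≤ f x + ⟪∇ f x, y - x⟫_ℝ + K / 2 * ‖y - x‖ ^ 2 := by
  set φ : ℝ → ℝ := fun t ↦ f (lineMap x y t) - t * ⟪∇ f x, y - x⟫_ℝ - K / 2 * t ^ 2 * ‖y - x‖ ^ 2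
  set φ' : ℝ → ℝ := fun t ↦ ⟪∇ f (lineMap x y t) - ∇ f x, y - x⟫_ℝ - K * t * ‖y - x‖ ^ 2
  have hφ : ∀ t, HasDerivAt φ (φ' t) t := fun t ↦ by
    refine ((((hf _).hasGradientAt.hasDerivAt_comp_lineMap (x := x) (y := y)).sub
      ((hasDerivAt_id t).mul_const ⟪∇ f x, y - x⟫_ℝ)).sub
      (((hasDerivAt_pow 2 t).const_mul (K / 2 : ℝ)).mul_const (‖y - x‖ ^ 2))).congr_deriv ?_
    simp only [φ', inner_sub_left]
    ring
  have hφ'_nonpos : ∀ t ∈ interior (Ici (0 : ℝ)), φ' t ≤ 0 := fun t ht ↦ by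
    rw [interior_Ici] at ht
    have hgrad : ‖∇ f (lineMap x y t) - ∇ f x‖ ≤ K * (t * ‖y - x‖) := by
      simpa [← dist_eq_norm, dist_lineMap_left, abs_of_pos (mem_Ioi.1 ht), dist_comm x y]
        using hlip.dist_le_mul (lineMap x y t) x
    have := (real_inner_le_norm _ _).trans
      (mul_le_mul_of_nonneg_right hgrad (norm_nonneg (y - x)))
    simp only [φ']
    nlinarith
  have hanti : AntitoneOn φ (Ici 0) :=
    antitoneOn_of_hasDerivWithinAt_nonpos (convex_Ici 0)
      (HasDerivAt.continuousOn fun t _ ↦ hφ t)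
      (fun t _ ↦ (hφ t).hasDerivWithinAt) hφ'_nonpos
  have := hanti (mem_Ici.2 le_rfl) (mem_Ici.2 zero_le_one) zero_le_one
  simp only [φ, lineMap_apply_zero, lineMap_apply_one] at this
  linarith

theorem Differentiable.apply_sub_smul_gradient_le (hf : Differentiable ℝ f) {K : ℝ≥0}
    (hlip : LipschitzWith K (∇ f)) (x : E) (η : ℝ) :
    f (x - η • ∇ f x) ≤ f x - η * (1 - K * η / 2) * ‖∇ f x‖ ^ 2 := by
  have := hf.le_add_inner_gradient_add_sq_norm hlip x (x - η • ∇ f x)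
  rw [sub_sub_cancel_left, inner_neg_right, real_inner_smul_right, real_inner_self_eq_norm_sq,
    norm_neg, norm_smul, mul_pow, Real.norm_eq_abs, sq_abs] at this
  linarith

theorem ConvexOn.two_mul_sub_le_of_gradient_step (hconv : ConvexOn ℝ univ f) {x : E}
    (hf : DifferentiableAt ℝ f x) {η : ℝ} (hη : 0 ≤ η) (z : E) :
    2 * η * (f x - f z) ≤ ‖x - z‖ ^ 2 - ‖x - η • ∇ f x - z‖ ^ 2 + η ^ 2 * ‖∇ f x‖ ^ 2 := by
  have hgrad := mul_le_mul_of_nonneg_left (hconv.inner_gradient_le_sub hf.hasGradientAt z) hη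
  have hexpand : ‖x - η • ∇ f x - z‖ ^ 2
      = ‖x - z‖ ^ 2 - 2 * η * ⟪∇ f x, x - z⟫_ℝ + η ^ 2 * ‖∇ f x‖ ^ 2 := by
    rw [sub_right_comm, norm_sub_sq_real, real_inner_smul_right, norm_smul, mul_pow,
      Real.norm_eq_abs, sq_abs, real_inner_comm]
    ring
  rw [← neg_sub x z, inner_neg_right] at hgrad
  linarith

section GradientDescent

variable {η : ℝ} {x : ℕ → E}

theorem Differentiable.mul_sum_sq_norm_gradient_le (hf : Differentiable ℝ f) {K : ℝ≥0}
    (hlip : LipschitzWith K (∇ f)) (hx : ∀ n, x (n + 1) = x n - η • ∇ f (x n)) (N : ℕ) :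
    η * (1 - K * η / 2) * ∑ n ∈ Finset.range N, ‖∇ f (x n)‖ ^ 2 ≤ f (x 0) - f (x N) := by
  rw [Finset.mul_sum, ← Finset.sum_range_sub' (fun n ↦ f (x n))]
  refine Finset.sum_le_sum fun n _ ↦ ?_
  have := hf.apply_sub_smul_gradient_le hlip (x n) η
  rw [← hx n] at this
  linarith

theorem ConvexOn.two_mul_sum_sub_le (hconv : ConvexOn ℝ univ f) (hf : Differentiable ℝ f)
    (hη : 0 ≤ η) (hx : ∀ n, x (n + 1) = x n - η • ∇ f (x n)) (z : E) (N : ℕ) :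
    2 * η * ∑ n ∈ Finset.range N, (f (x n) - f z)
      ≤ ‖x 0 - z‖ ^ 2 - ‖x N - z‖ ^ 2 + η ^ 2 * ∑ n ∈ Finset.range N, ‖∇ f (x n)‖ ^ 2 := by
  rw [Finset.mul_sum, Finset.mul_sum, ← Finset.sum_range_sub' (fun n ↦ ‖x n - z‖ ^ 2),
    ← Finset.sum_add_distrib]
  refine Finset.sum_le_sum fun n _ ↦ ?_
  have := hconv.two_mul_sub_le_of_gradient_step (hf (x n)) hη z
  rwa [← hx n] at this

end GradientDescent

/-- Summability of the excess objective along gradient descent. For a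
convex `f : ℝ^d → ℝ` with `L`-Lipschitz gradient, minimizer `x*`, step size
`0 < η < 2/L` and iterates `x_{n+1} = x_n − η·∇f(x_n)`, every partial sum satisfies
`η·Σ_{n<N} (f(x_n) − f(x*)) ≤ ‖x_0 − x*‖²/2 + (η/(2(1 − Lη/2)))·(f(x_0) − f(x*))`,
i.e. the full series obeys this bound. -/
theorem gradient_descent_summable_excess
    (d : ℕ) (f : EuclideanSpace ℝ (Fin d) → ℝ)
    (hconv : ConvexOn ℝ Set.univ f) (hdiff : Differentiable ℝ f)
    (L : ℝ) (hL : 0 < L) (hlip : LipschitzWith L.toNNReal (gradient f))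
    (xstar : EuclideanSpace ℝ (Fin d)) (hmin : ∀ y, f xstar ≤ f y)
    (η : ℝ) (hη0 : 0 < η) (hη : η < 2 / L)
    (x : ℕ → EuclideanSpace ℝ (Fin d))
    (hx : ∀ n : ℕ, x (n+1) = x n - η • gradient f (x n)) :
    ∀ N : ℕ, η * ∑ n ∈ Finset.range N, (f (x n) - f xstar) ≤
      ‖x 0 - xstar‖ ^ 2 / 2 + (η / (2 * (1 - L * η / 2))) * (f (x 0) - f xstar) := by
  intro N
  have hC : 0 < 1 - L * η / 2 := by
    rw [lt_div_iff₀ hL] at hη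
    linarith
  have hgrad := hdiff.mul_sum_sq_norm_gradient_le hlip hx N
  rw [Real.coe_toNNReal L hL.le] at hgrad
  have hexcess := hconv.two_mul_sum_sub_le hdiff hη0.le hx xstar N
  set C := 1 - L * η / 2
  set S := ∑ n ∈ Finset.range N, ‖∇ f (x n)‖ ^ 2
  have hS : η ^ 2 / 2 * S ≤ η / (2 * C) * (f (x 0) - f xstar) :=
    calc η ^ 2 / 2 * S = η / (2 * C) * (η * C * S) := by field_simp [hC.ne']
      _ ≤ η / (2 * C) * (f (x 0) - f xstar) := by
          gcongr
          linarith [hmin (x N)]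
  linarith [sq_nonneg ‖x N - xstar‖]
end

section
/- Let H be a real Hilbert space, f : H → [0,∞) a convex differentiable non-negative function, α > 0, and let x : (0,∞) → H be a twice differentiable solution of the heavy ball ODE x''(t) = −(α/t)·x'(t) − ∇f(x(t)) with lim_{t→0⁺} x(t) = x₀ and lim_{t→0⁺} x'(t) = 0. Then ‖x'(t)‖ ≤ √(2·f(x₀)) and ‖x(t) − x₀‖ ≤ √(2·f(x₀))·t for all t > 0, and consequently f(x(t)) ≥ inf { f(z) : z ∈ H, ‖z − x₀‖ ≤ √(2·f(x₀))·t } for all t > 0. -/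
/-!
Along a solution, the energy `‖v‖² / 2 + f x` (where `v = x'`) has derivative
`-(α / t) ‖v‖² ≤ 0`, so it is non-increasing on `(0, ∞)`; as `t → 0⁺` it tends to `f x₀`.
Since `f ≥ 0`, this bounds the speed by `√(2 f x₀)`, and the mean value inequality on `[s, t]`
with `s → 0⁺` bounds the displacement by `√(2 f x₀) t`. Thus `x t` lies in the ball over which
the infimum is taken, and `f ≥ 0` keeps that infimum from being a junk value.
-/

open Filter Set Topology

theorem AntitoneOn.le_of_tendsto_nhdsGT {g : ℝ → ℝ} {a L t : ℝ} (hg : AntitoneOn g (Ioi a))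
    (hL : Tendsto g (𝓝[>] a) (𝓝 L)) (ht : a < t) : g t ≤ L := by
  refine ge_of_tendsto hL ?_
  filter_upwards [Ioo_mem_nhdsGT ht] with s hs
  exact hg hs.1 ht hs.2.le

section

variable {H : Type*} [NormedAddCommGroup H]

theorem norm_sub_le_of_norm_deriv_le_of_tendsto_nhdsGT [NormedSpace ℝ H] {x v : ℝ → H} {x₀ : H}
    {a C t : ℝ} (hx : ∀ s > a, HasDerivAt x (v s) s) (hv : ∀ s > a, ‖v s‖ ≤ C)
    (hx₀ : Tendsto x (𝓝[>] a) (𝓝 x₀)) (ht : a < t) : ‖x t - x₀‖ ≤ C * (t - a) := by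
  have hlip : ∀ s > a, ‖x t - x s‖ ≤ C * |t - s| := fun s hs =>
    (convex_Ioi a).norm_image_sub_le_of_norm_hasDerivWithin_le
      (fun u hu => (hx u hu).hasDerivWithinAt) hv hs ht
  have hlim : Tendsto (fun s => C * |t - s|) (𝓝[>] a) (𝓝 (C * |t - a|)) :=
    ((continuous_const.sub continuous_id).abs.const_smul C).continuousAt.tendsto.mono_left
      nhdsWithin_le_nhds
  rw [← abs_of_pos (sub_pos.2 ht)]
  exact le_of_tendsto_of_tendsto (tendsto_const_nhds.sub hx₀).norm hlim
    (eventually_nhdsWithin_of_forall hlip)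

noncomputable def mechanicalEnergy (f : H → ℝ) (x v : ℝ → H) (t : ℝ) : ℝ :=
  ‖v t‖ ^ 2 / 2 + f (x t)

variable {f : H → ℝ} {x v : ℝ → H}

theorem tendsto_mechanicalEnergy {l : Filter ℝ} {x₀ v₀ : H} (hf : ContinuousAt f x₀)
    (hx : Tendsto x l (𝓝 x₀)) (hv : Tendsto v l (𝓝 v₀)) :
    Tendsto (mechanicalEnergy f x v) l (𝓝 (‖v₀‖ ^ 2 / 2 + f x₀)) :=
  ((hv.norm.pow 2).div_const 2).add (hf.tendsto.comp hx)

theorem norm_le_sqrt_of_mechanicalEnergy_le {t e : ℝ} (hf : 0 ≤ f (x t))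
    (h : mechanicalEnergy f x v t ≤ e) : ‖v t‖ ≤ √(2 * e) := by
  rw [mechanicalEnergy] at h
  exact Real.le_sqrt_of_sq_le (by linarith)

variable [InnerProductSpace ℝ H] [CompleteSpace H]

theorem hasDerivAt_mechanicalEnergy {c t : ℝ} (hf : DifferentiableAt ℝ f (x t))
    (hx : HasDerivAt x (v t) t) (hv : HasDerivAt v (-c • v t - gradient f (x t)) t) :
    HasDerivAt (mechanicalEnergy f x v) (-c * ‖v t‖ ^ 2) t := by
  have hfx : HasDerivAt (fun s => f (x s)) (inner ℝ (gradient f (x t)) (v t)) t := by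
    simpa only [Function.comp_def, InnerProductSpace.toDual_apply_apply] using
      hf.hasGradientAt.hasFDerivAt.comp_hasDerivAt t hx
  refine ((hv.norm_sq.div_const 2).add hfx).congr_deriv ?_
  simp only [inner_sub_right, inner_smul_right, real_inner_self_eq_norm_sq,
    real_inner_comm (v t)]
  ring

theorem antitoneOn_mechanicalEnergy {α : ℝ} (hf : Differentiable ℝ f) (hα : 0 ≤ α)
    (hx : ∀ t > (0:ℝ), HasDerivAt x (v t) t)
    (hv : ∀ t > (0:ℝ), HasDerivAt v (-(α / t) • v t - gradient f (x t)) t) :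
    AntitoneOn (mechanicalEnergy f x v) (Ioi 0) := by
  have hE t (ht : 0 < t) := hasDerivAt_mechanicalEnergy (hf (x t)) (hx t ht) (hv t ht)
  refine antitoneOn_of_hasDerivWithinAt_nonpos (f' := fun t => -(α / t) * ‖v t‖ ^ 2)
    (convex_Ioi 0) (fun t ht => (hE t ht).continuousAt.continuousWithinAt)
    (fun t ht => ?_) (fun t ht => ?_)
  all_goals rw [interior_Ioi] at ht
  · exact (hE t ht).hasDerivWithinAt
  · exact mul_nonpos_of_nonpos_of_nonneg (neg_nonpos.2 (div_nonneg hα ht.le)) (sq_nonneg _)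

end

theorem heavy_ball_finite_speed_lower_bound_general
    (H : Type*) [NormedAddCommGroup H] [InnerProductSpace ℝ H] [CompleteSpace H]
    (f : H → ℝ) (hdiff : Differentiable ℝ f)
    (hnonneg : ∀ z : H, 0 ≤ f z)
    (α : ℝ) (hα : 0 < α)
    (x v : ℝ → H)
    (hx : ∀ t > (0:ℝ), HasDerivAt x (v t) t)
    (hv : ∀ t > (0:ℝ), HasDerivAt v (-(α / t) • v t - gradient f (x t)) t)
    (x₀ : H)
    (hx0 : Filter.Tendsto x (nhdsWithin 0 (Set.Ioi 0)) (nhds x₀))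
    (hv0 : Filter.Tendsto v (nhdsWithin 0 (Set.Ioi 0)) (nhds 0)) :
    (∀ t > (0:ℝ), ‖v t‖ ≤ Real.sqrt (2 * f x₀)) ∧
    (∀ t > (0:ℝ), ‖x t - x₀‖ ≤ Real.sqrt (2 * f x₀) * t) ∧
    (∀ t > (0:ℝ),
      sInf (f '' {z : H | ‖z - x₀‖ ≤ Real.sqrt (2 * f x₀) * t}) ≤ f (x t)) := by
  have hE₀ : Tendsto (mechanicalEnergy f x v) (𝓝[>] 0) (𝓝 (f x₀)) := by
    simpa using tendsto_mechanicalEnergy (hdiff x₀).continuousAt hx0 hv0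
  have hE t (ht : 0 < t) : mechanicalEnergy f x v t ≤ f x₀ :=
    (antitoneOn_mechanicalEnergy hdiff hα.le hx hv).le_of_tendsto_nhdsGT hE₀ ht
  have hspeed t (ht : 0 < t) : ‖v t‖ ≤ √(2 * f x₀) :=
    norm_le_sqrt_of_mechanicalEnergy_le (hnonneg _) (hE t ht)
  have hdisp t (ht : 0 < t) : ‖x t - x₀‖ ≤ √(2 * f x₀) * t := by
    simpa using norm_sub_le_of_norm_deriv_le_of_tendsto_nhdsGT hx hspeed hx0 ht
  refine ⟨hspeed, hdisp, fun t ht => csInf_le ⟨0, ?_⟩ ⟨x t, hdisp t ht, rfl⟩⟩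
  rintro _ ⟨z, -, rfl⟩
  exact hnonneg z

/-- Finite speed of heavy ball trajectories. For a convex differentiable
non-negative `f` on a real Hilbert space, `α > 0`, and a solution of
`x'' = −(α/t)·x' − ∇f(x)` with `x(t) → x₀` and `x'(t) → 0` as `t → 0⁺`, one has
`‖x'(t)‖ ≤ √(2 f(x₀))`, `‖x(t) − x₀‖ ≤ √(2 f(x₀))·t`, and consequently
`f(x(t)) ≥ inf { f(z) : ‖z − x₀‖ ≤ √(2 f(x₀))·t }` for all `t > 0`. -/
theorem heavy_ball_finite_speed_lower_bound
    (H : Type*) [NormedAddCommGroup H] [InnerProductSpace ℝ H] [CompleteSpace H]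
    (f : H → ℝ) (hconv : ConvexOn ℝ Set.univ f) (hdiff : Differentiable ℝ f)
    (hnonneg : ∀ z : H, 0 ≤ f z)
    (α : ℝ) (hα : 0 < α)
    (x v : ℝ → H)
    (hx : ∀ t > (0:ℝ), HasDerivAt x (v t) t)
    (hv : ∀ t > (0:ℝ), HasDerivAt v (-(α / t) • v t - gradient f (x t)) t)
    (x₀ : H)
    (hx0 : Filter.Tendsto x (nhdsWithin 0 (Set.Ioi 0)) (nhds x₀))
    (hv0 : Filter.Tendsto v (nhdsWithin 0 (Set.Ioi 0)) (nhds 0)) :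
    (∀ t > (0:ℝ), ‖v t‖ ≤ Real.sqrt (2 * f x₀)) ∧
    (∀ t > (0:ℝ), ‖x t - x₀‖ ≤ Real.sqrt (2 * f x₀) * t) ∧
    (∀ t > (0:ℝ),
      sInf (f '' {z : H | ‖z - x₀‖ ≤ Real.sqrt (2 * f x₀) * t}) ≤ f (x t)) :=
  heavy_ball_finite_speed_lower_bound_general H f hdiff hnonneg α hα x v hx hv x₀ hx0 hv0
end
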